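/- arXiv:1801.04607 — 10 statements merged into one kernel-verified Lean document; each statement's English description precedes it below -/
import Mathlib

section
/- For any integer d ≥ 1 and real δ with 0 ≤ δ ≤ 1, the Chebyshev polynomial of the first kind satisfies T_d(1+δ) ≥ 2^{d√δ − 1}. -/
lemma cheb_eval_aux (t s : ℝ) (hs : t ^ 2 - s ^ 2 = 1) :
    ∀ n : ℕ, (Polynomial.Chebyshev.T ℝ n).eval t = ((t + s) ^ n + (t - s) ^ n) / 2 := by
  intro n
  induction n using Nat.strong_induction_on with
  | _ n ih =>
    match n with
    | 0 => simp
    | 1 => simp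
    | (n + 2) =>
      have h1 := ih (n + 1) (by omega)
      have h0 := ih n (by omega)
      rw [show ((n + 2 : ℕ) : ℤ) = (n : ℤ) + 2 by push_cast; ring,
        Polynomial.Chebyshev.T_add_two]
      simp only [Polynomial.eval_sub, Polynomial.eval_mul, Polynomial.eval_ofNat,
        Polynomial.eval_X]
      rw [show ((n : ℤ) + 1) = ((n + 1 : ℕ) : ℤ) by push_cast; ring, h1]
      rw [show ((n : ℤ)) = ((n : ℕ) : ℤ) by rfl, h0]
      linear_combination (((t + s) ^ n + (t - s) ^ n) / 2) * hs

lemma two_rpow_le_one_add (x : ℝ) (h0 : 0 ≤ x) (h1 : x ≤ 1) : (2 : ℝ) ^ x ≤ 1 + x := by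
  have hc := convexOn_exp.2 (Set.mem_univ (0 : ℝ)) (Set.mem_univ (Real.log 2))
    (show (0:ℝ) ≤ 1 - x by linarith) h0 (by ring)
  simp only [smul_eq_mul, mul_zero, zero_add, Real.exp_zero, mul_one,
    Real.exp_log two_pos] at hc
  rw [Real.rpow_def_of_pos two_pos]
  calc Real.exp (Real.log 2 * x) = Real.exp (x * Real.log 2) := by ring_nf
    _ ≤ (1 - x) + x * 2 := hc
    _ = 1 + x := by ring

/-- For any integer `d ≥ 1` and real `0 ≤ δ ≤ 1`, `T_d(1+δ) ≥ 2^(d·√δ − 1)`. -/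
theorem chebyshev_ge_two_rpow (d : ℕ) (hd : 1 ≤ d) (δ : ℝ) (hδ0 : 0 ≤ δ) (hδ1 : δ ≤ 1) :
    (2 : ℝ) ^ ((d : ℝ) * Real.sqrt δ - 1) ≤ (Polynomial.Chebyshev.T ℝ d).eval (1 + δ) := by
  set t : ℝ := 1 + δ with ht
  set s : ℝ := Real.sqrt (δ ^ 2 + 2 * δ) with hsdef
  have hs0 : 0 ≤ s := Real.sqrt_nonneg _
  have hssq : s ^ 2 = δ ^ 2 + 2 * δ := Real.sq_sqrt (by nlinarith)
  have hs : t ^ 2 - s ^ 2 = 1 := by rw [hssq]; ring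
  have hb : 0 ≤ t - s := by
    nlinarith [sq_nonneg (t - s), sq_nonneg (t + s)]
  rw [cheb_eval_aux t s hs d]
  -- lower bound a = t + s
  have hsd : Real.sqrt δ ≤ s := by
    apply Real.sqrt_le_sqrt; nlinarith
  have hx0 : 0 ≤ Real.sqrt δ := Real.sqrt_nonneg _
  have hx1 : Real.sqrt δ ≤ 1 := by
    rw [show (1:ℝ) = Real.sqrt 1 by simp]
    exact Real.sqrt_le_sqrt hδ1
  have ha : (2 : ℝ) ^ Real.sqrt δ ≤ t + s := by
    calc (2 : ℝ) ^ Real.sqrt δ ≤ 1 + Real.sqrt δ := two_rpow_le_one_add _ hx0 hx1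
      _ ≤ t + s := by rw [ht]; linarith
  have hpow : (2 : ℝ) ^ ((d : ℝ) * Real.sqrt δ) ≤ (t + s) ^ d := by
    have h2 : ((2 : ℝ) ^ Real.sqrt δ) ^ d ≤ (t + s) ^ d :=
      pow_le_pow_left₀ (Real.rpow_nonneg (by norm_num) _) ha d
    calc (2 : ℝ) ^ ((d : ℝ) * Real.sqrt δ) = (2 : ℝ) ^ (Real.sqrt δ * (d : ℝ)) := by ring_nf
      _ = ((2 : ℝ) ^ Real.sqrt δ) ^ (d : ℝ) := Real.rpow_mul (by norm_num) _ _
      _ = ((2 : ℝ) ^ Real.sqrt δ) ^ d := Real.rpow_natCast _ d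
      _ ≤ (t + s) ^ d := h2
  have hbpow : 0 ≤ (t - s) ^ d := pow_nonneg hb d
  have : (2 : ℝ) ^ ((d : ℝ) * Real.sqrt δ - 1)
      = (2 : ℝ) ^ ((d : ℝ) * Real.sqrt δ) / 2 := by
    rw [Real.rpow_sub two_pos, Real.rpow_one]
  rw [this]
  have h2 : (2 : ℝ) ^ ((d : ℝ) * Real.sqrt δ) / 2 ≤ (t + s) ^ d / 2 := by linarith
  calc (2 : ℝ) ^ ((d : ℝ) * Real.sqrt δ) / 2 ≤ (t + s) ^ d / 2 := h2
    _ ≤ ((t + s) ^ d + (t - s) ^ d) / 2 := by linarith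
end

section
/- Every real-valued function f defined on the set of Boolean strings in {0,1}^N of Hamming weight at most n agrees on its domain with a real multivariate polynomial of total degree at most n. -/
noncomputable def boolCoeff {N : ℕ} (f : (Fin N → ℝ) → ℝ) : Finset (Fin N) → ℝ :=
  Finset.strongInduction fun S ih =>
    f (fun i => if i ∈ S then (1:ℝ) else 0) -
      ∑ T ∈ S.ssubsets.attach, ih T (Finset.mem_ssubsets.mp T.2)

lemma boolCoeff_eq {N : ℕ} (f : (Fin N → ℝ) → ℝ) (S : Finset (Fin N)) :
    boolCoeff f S =
      f (fun i => if i ∈ S then (1:ℝ) else 0) - ∑ T ∈ S.ssubsets, boolCoeff f T := by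
  rw [boolCoeff, Finset.strongInduction_eq, sub_right_inj]
  exact Finset.sum_attach _ _

lemma sum_boolCoeff {N : ℕ} (f : (Fin N → ℝ) → ℝ) (A : Finset (Fin N)) :
    ∑ S ∈ A.powerset, boolCoeff f S = f (fun i => if i ∈ A then (1:ℝ) else 0) := by
  have hA : A ∈ A.powerset := Finset.mem_powerset_self A
  rw [← Finset.add_sum_erase _ _ hA]
  have : A.powerset.erase A = A.ssubsets := rfl
  rw [this, boolCoeff_eq]
  ring

/-- Every real-valued function on the Boolean strings in `{0,1}^N` of Hamming weight
at most `n` agrees on that domain with a real polynomial of total degree at most `n`. -/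
theorem exists_polynomial_of_degree_le_weight {N n : ℕ}
    (f : (Fin N → ℝ) → ℝ) :
    ∃ p : MvPolynomial (Fin N) ℝ, p.totalDegree ≤ n ∧
      ∀ x : Fin N → ℝ, (∀ i, x i = 0 ∨ x i = 1) → (∑ i, x i) ≤ n →
        MvPolynomial.eval x p = f x := by
  classical
  refine ⟨∑ S ∈ (Finset.univ : Finset (Fin N)).powerset.filter (fun S => S.card ≤ n),
      MvPolynomial.C (boolCoeff f S) * ∏ i ∈ S, MvPolynomial.X i, ?_, ?_⟩
  · refine le_trans (MvPolynomial.totalDegree_finset_sum _ _) ?_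
    refine Finset.sup_le fun S hS => ?_
    have hcard : S.card ≤ n := (Finset.mem_filter.mp hS).2
    refine le_trans (MvPolynomial.totalDegree_mul _ _) ?_
    rw [MvPolynomial.totalDegree_C, zero_add]
    refine le_trans (MvPolynomial.totalDegree_finset_prod _ _) ?_
    calc ∑ i ∈ S, (MvPolynomial.X i : MvPolynomial (Fin N) ℝ).totalDegree
        ≤ ∑ _i ∈ S, 1 := Finset.sum_le_sum fun i _ => le_of_eq (MvPolynomial.totalDegree_X i)
      _ = S.card := by simp
      _ ≤ n := hcard
  · intro x hx hsum
    set A : Finset (Fin N) := Finset.univ.filter (fun i => x i = 1) with hAdef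
    have hxA : x = fun i => if i ∈ A then (1:ℝ) else 0 := by
      funext i
      rcases hx i with h | h <;> simp [hAdef, h]
    have hsumA : (∑ i, x i) = A.card := by
      rw [← Finset.sum_filter_add_sum_filter_not Finset.univ (fun i => x i = 1) x]
      have h1 : ∑ i ∈ Finset.univ.filter (fun i => x i = 1), x i = A.card := by
        rw [Finset.sum_congr rfl (fun i hi => (Finset.mem_filter.mp hi).2)]
        simp [hAdef]
      have h2 : ∑ i ∈ Finset.univ.filter (fun i => ¬ x i = 1), x i = 0 := by
        refine Finset.sum_eq_zero fun i hi => ?_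
        rcases hx i with h | h
        · exact h
        · exact absurd h (Finset.mem_filter.mp hi).2
      rw [h1, h2, add_zero]
    have hAcard : A.card ≤ n := by
      have : (A.card : ℝ) ≤ n := hsumA ▸ hsum
      exact_mod_cast this
    rw [map_sum]
    have hev : ∀ S ∈ (Finset.univ : Finset (Fin N)).powerset.filter (fun S => S.card ≤ n),
        MvPolynomial.eval x (MvPolynomial.C (boolCoeff f S) * ∏ i ∈ S, MvPolynomial.X i)
          = if S ⊆ A then boolCoeff f S else 0 := by
      intro S _
      rw [map_mul, MvPolynomial.eval_C, map_prod]
      simp only [MvPolynomial.eval_X]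
      by_cases hSA : S ⊆ A
      · have : ∏ i ∈ S, x i = 1 := Finset.prod_eq_one fun i hi => by
          have := hSA hi
          simp [hAdef] at this
          exact this
        rw [this, if_pos hSA, mul_one]
      · obtain ⟨j, hjS, hjA⟩ := Finset.not_subset.mp hSA
        have hxj : x j = 0 := by
          rcases hx j with h | h
          · exact h
          · exact absurd (by simp [hAdef, h]) hjA
        rw [Finset.prod_eq_zero hjS hxj, if_neg hSA, mul_zero]
    rw [Finset.sum_congr rfl hev, Finset.sum_ite, Finset.sum_const, smul_zero, add_zero]
    have hfil : ((Finset.univ : Finset (Fin N)).powerset.filter (fun S => S.card ≤ n)).filter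
        (fun S => S ⊆ A) = A.powerset := by
      ext S
      simp only [Finset.mem_filter, Finset.mem_powerset]
      constructor
      · rintro ⟨_, hSA⟩; exact hSA
      · intro hSA
        exact ⟨⟨Finset.subset_univ S, le_trans (Finset.card_le_card hSA) hAcard⟩, hSA⟩
    rw [hfil, sum_boolCoeff, ← hxA]
end

section
/- Let 0 ≤ d ≤ n−1 be integers and φ : ℝ^n → ℝ a polynomial of total degree at most d. Then |φ(1,1,…,1)| ≤ 2^d · C(n,d) · max over Boolean inputs x ∈ {0,1}^n of Hamming weight at most d of |φ(x)|. -/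
/-!
On `{0,1}ⁿ` a polynomial of degree at most `d` is a combination of the indicators
`S ↦ [A ⊆ S]` with `|A| ≤ d`. For every such function `f` one has the exact extrapolation
formula `f(1ⁿ) = ∑_{|U| ≤ d} c_U f(U)`, where `c_U = ∑_{U ⊆ T, |T| ≤ d} (-1)^{|T \ U|}`:
after exchanging the sums, the coefficient of `[A ⊆ ·]` is
`∑_{A ⊆ T, |T| ≤ d} ∑_{A ⊆ U ⊆ T} (-1)^{|T \ U|} = 1`.
Each `c_U` is a partial alternating sum of binomial coefficients, so
`|c_U| = C(n-|U|-1, d-|U|) ≤ C(n-|U|, d-|U|)`, and `∑_{|U| ≤ d} C(n-|U|, d-|U|) = 2^d C(n,d)`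
counts the pairs `U ⊆ T` with `|T| = d`.
-/

open Finset MvPolynomial

namespace Finset

variable {ι : Type*}

theorem sum_powerset_filter_card_le {M : Type*} [AddCommMonoid M] (s : Finset ι) (k : ℕ)
    (g : ℕ → M) :
    ∑ t ∈ s.powerset with #t ≤ k, g #t = ∑ j ∈ range (k + 1), (#s).choose j • g j := by
  rw [← sum_fiberwise_of_maps_to (g := card) (t := range (k + 1))
    fun t ht => by simpa [Nat.lt_succ_iff] using (mem_filter.mp ht).2]
  refine sum_congr rfl fun j hj => ?_
  have hjk : j ≤ k := Nat.lt_succ_iff.mp (mem_range.mp hj)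
  have hfibre : ({t ∈ s.powerset | #t ≤ k} : Finset _).filter (#· = j) = powersetCard j s := by
    rw [powersetCard_eq_filter, filter_filter]
    exact filter_congr fun t _ => ⟨And.right, fun h => ⟨h ▸ hjk, h⟩⟩
  rw [sum_congr hfibre fun t ht => by rw [(mem_powersetCard.mp ht).2], sum_const,
    card_powersetCard]

theorem sum_Icc_neg_one_pow_card_sdiff [DecidableEq ι] {s t : Finset ι} (h : s ⊆ t) :
    ∑ u ∈ Icc s t, (-1 : ℤ) ^ #(t \ u) = if s = t then 1 else 0 := by
  have hcompl :
      ∑ u ∈ Icc s t, (-1 : ℤ) ^ #(t \ u) = ∑ r ∈ (t \ s).powerset, (-1 : ℤ) ^ #r := by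
    refine sum_nbij' (t \ ·) (t \ ·) ?_ ?_ ?_ ?_ fun _ _ => rfl
    · intro u hu
      exact mem_powerset.mpr (sdiff_subset_sdiff subset_rfl (mem_Icc.mp hu).1)
    · intro r hr
      rw [mem_powerset, subset_sdiff] at hr
      exact mem_Icc.mpr ⟨subset_sdiff.mpr ⟨h, hr.2.symm⟩, sdiff_subset⟩
    · exact fun u hu => sdiff_sdiff_eq_self (mem_Icc.mp hu).2
    · exact fun r hr => sdiff_sdiff_eq_self ((mem_powerset.mp hr).trans sdiff_subset)
  rw [hcompl, sum_powerset_neg_one_pow_card]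
  exact if_congr ⟨fun hts => subset_antisymm h (sdiff_eq_empty_iff_subset.mp hts),
    fun hst => by simp [hst]⟩ rfl rfl

end Finset

theorem Int.abs_alternating_sum_range_choose_le {m k : ℕ} (hk : k ≤ m) :
    |∑ j ∈ Finset.range (k + 1), ((-1) ^ j * m.choose j : ℤ)| ≤ m.choose k := by
  cases m with
  | zero => simp [Nat.le_zero.mp hk]
  | succ m =>
    rw [Int.alternating_sum_range_choose_eq_choose, abs_mul, abs_pow, abs_neg, abs_one, one_pow,
      one_mul, Nat.abs_cast, Nat.cast_le]
    exact Nat.choose_le_choose k m.le_succ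

theorem Finsupp.card_support_le_sum {ι : Type*} (α : ι →₀ ℕ) :
    #α.support ≤ α.sum fun _ e => e := by
  simpa [Finsupp.sum] using card_nsmul_le_sum α.support α 1 fun i hi =>
    Nat.one_le_iff_ne_zero.mpr (Finsupp.mem_support_iff.mp hi)

theorem MvPolynomial.eval_indicator_eq_sum_coeff {ι R : Type*} [CommSemiring R] [DecidableEq ι]
    (φ : MvPolynomial ι R) (u : Finset ι) :
    eval (fun i => if i ∈ u then 1 else 0) φ =
      ∑ α ∈ φ.support with α.support ⊆ u, coeff α φ := by
  rw [eval_eq, sum_filter]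
  refine sum_congr rfl fun α _ => ?_
  split_ifs with hα
  · rw [prod_eq_one fun i hi => by rw [if_pos (hα hi), one_pow], mul_one]
  · obtain ⟨i, hi, hiu⟩ := not_subset.mp hα
    rw [prod_eq_zero hi (by rw [if_neg hiu, zero_pow (Finsupp.mem_support_iff.mp hi)]), mul_zero]

theorem Finset.sum_choose_card_sub_card (ι : Type*) [Fintype ι] (d : ℕ) :
    ∑ u : Finset ι with #u ≤ d, (Fintype.card ι - #u).choose (d - #u) =
      2 ^ d * (Fintype.card ι).choose d := by
  rw [← powerset_univ,
    sum_powerset_filter_card_le univ d fun m => (Fintype.card ι - m).choose (d - m), card_univ]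
  calc ∑ j ∈ range (d + 1), (Fintype.card ι).choose j • (Fintype.card ι - j).choose (d - j)
      = ∑ j ∈ range (d + 1), (Fintype.card ι).choose d * d.choose j :=
        sum_congr rfl fun j hj => (Nat.choose_mul (Nat.lt_succ_iff.mp (mem_range.mp hj))).symm
    _ = 2 ^ d * (Fintype.card ι).choose d := by rw [← mul_sum, Nat.sum_range_choose, mul_comm]

section Extrapolation

variable {ι : Type*} [Fintype ι] [DecidableEq ι]

def extrapolationCoeff (d : ℕ) (u : Finset ι) : ℤ :=
  ∑ t with u ⊆ t ∧ #t ≤ d, (-1) ^ #(t \ u)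

theorem sum_extrapolationCoeff_of_subset {d : ℕ} {a : Finset ι} (ha : #a ≤ d) :
    ∑ u with a ⊆ u ∧ #u ≤ d, extrapolationCoeff d u = 1 := by
  unfold extrapolationCoeff
  rw [sum_comm' (t' := {t | a ⊆ t ∧ #t ≤ d}) (s' := fun t => Icc a t)]
  · rw [sum_eq_single_of_mem a (by simp [ha])]
    · simp
    · intro t ht hta
      rw [sum_Icc_neg_one_pow_card_sdiff (mem_filter.mp ht).2.1, if_neg (Ne.symm hta)]
  · intro u t
    simp only [mem_filter, mem_univ, true_and, mem_Icc]
    constructor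
    · rintro ⟨⟨hau, -⟩, hut, htd⟩
      exact ⟨⟨hau, hut⟩, hau.trans hut, htd⟩
    · rintro ⟨⟨hau, hut⟩, -, htd⟩
      exact ⟨⟨hau, (card_le_card hut).trans htd⟩, hut, htd⟩

theorem extrapolationCoeff_eq_alternating_sum {d : ℕ} {u : Finset ι} (hu : #u ≤ d) :
    extrapolationCoeff d u =
      ∑ j ∈ range (d - #u + 1), ((-1) ^ j * (Fintype.card ι - #u).choose j : ℤ) := by
  have hshift :
      extrapolationCoeff d u = ∑ r ∈ (univ \ u).powerset with #r ≤ d - #u, (-1) ^ #r := by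
    refine sum_nbij' (· \ u) (u ∪ ·) ?_ ?_ ?_ ?_ fun _ _ => rfl
    · intro t ht
      rw [mem_filter] at ht
      rw [mem_filter, mem_powerset, card_sdiff_of_subset ht.2.1]
      exact ⟨sdiff_subset_sdiff (subset_univ t) subset_rfl, by omega⟩
    · intro r hr
      rw [mem_filter, mem_powerset, subset_sdiff] at hr
      rw [mem_filter, card_union_of_disjoint hr.1.2.symm]
      exact ⟨mem_univ _, subset_union_left, by omega⟩
    · exact fun t ht => union_sdiff_of_subset (mem_filter.mp ht).2.1
    · exact fun r hr =>
        union_sdiff_cancel_left (subset_sdiff.mp (mem_powerset.mp (mem_filter.mp hr).1)).2.symm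
  rw [hshift, sum_powerset_filter_card_le, card_univ_sdiff]
  simp only [nsmul_eq_mul, mul_comm]

theorem abs_extrapolationCoeff_le {d : ℕ} {u : Finset ι} (hu : #u ≤ d)
    (hd : d ≤ Fintype.card ι) :
    |extrapolationCoeff d u| ≤ (Fintype.card ι - #u).choose (d - #u) := by
  rw [extrapolationCoeff_eq_alternating_sum hu]
  exact Int.abs_alternating_sum_range_choose_le (by omega)

theorem eval_one_eq_sum_extrapolationCoeff {R : Type*} [CommRing R] {d : ℕ}
    {φ : MvPolynomial ι R} (hφ : φ.totalDegree ≤ d) :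
    eval (fun _ => 1) φ =
      ∑ u with #u ≤ d,
        (extrapolationCoeff d u : R) * eval (fun i => if i ∈ u then 1 else 0) φ := by
  have hone : (fun _ : ι => (1 : R)) = fun i => if i ∈ (univ : Finset ι) then 1 else 0 := by
    simp
  simp_rw [hone, eval_indicator_eq_sum_coeff, subset_univ, filter_true, mul_sum]
  rw [sum_comm' (t' := φ.support) (s' := fun α => {u | α.support ⊆ u ∧ #u ≤ d})]
  · refine sum_congr rfl fun α hα => ?_
    have hα_card : #α.support ≤ d :=
      (Finsupp.card_support_le_sum α).trans ((le_totalDegree hα).trans hφ)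
    rw [← sum_mul, ← Int.cast_sum, sum_extrapolationCoeff_of_subset hα_card, Int.cast_one,
      one_mul]
  · intro u α
    simp only [mem_filter, mem_univ, true_and]
    tauto

theorem abs_eval_one_le {R : Type*} [CommRing R] [LinearOrder R] [IsStrictOrderedRing R] {d : ℕ}
    (hd : d ≤ Fintype.card ι) {φ : MvPolynomial ι R} (hφ : φ.totalDegree ≤ d) {M : R}
    (hM : ∀ u : Finset ι, #u ≤ d → |eval (fun i => if i ∈ u then 1 else 0) φ| ≤ M) :
    |eval (fun _ => 1) φ| ≤ 2 ^ d * (Fintype.card ι).choose d * M := by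
  rw [eval_one_eq_sum_extrapolationCoeff hφ]
  calc _ ≤ ∑ u with #u ≤ d, |(extrapolationCoeff d u : R) *
          eval (fun i => if i ∈ u then 1 else 0) φ| := abs_sum_le_sum_abs _ _
    _ ≤ ∑ u : Finset ι with #u ≤ d, ((Fintype.card ι - #u).choose (d - #u) : R) * M := by
        refine sum_le_sum fun u hu => ?_
        have hud := (mem_filter.mp hu).2
        rw [abs_mul, ← Int.cast_abs]
        exact mul_le_mul (by exact_mod_cast abs_extrapolationCoeff_le hud hd) (hM u hud)
          (abs_nonneg _) (Nat.cast_nonneg _)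
    _ = 2 ^ d * (Fintype.card ι).choose d * M := by
        rw [← sum_mul]
        exact_mod_cast congrArg (fun k : ℕ => (k : R) * M) (sum_choose_card_sub_card ι d)

end Extrapolation

/-- Extrapolation lemma: if `0 ≤ d ≤ n−1` and `φ : ℝⁿ → ℝ` has total degree at most `d`,
then `|φ(1ⁿ)| ≤ 2^d · C(n,d) · max_{x ∈ {0,1}ⁿ, |x| ≤ d} |φ(x)|`. -/
theorem extrapolation_lemma (n d : ℕ) (hdn : d ≤ n - 1)
    (φ : MvPolynomial (Fin n) ℝ) (hdeg : φ.totalDegree ≤ d) :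
    |MvPolynomial.eval (fun _ => (1 : ℝ)) φ| ≤
      2 ^ d * (n.choose d) *
        ((Finset.univ.filter
            (fun b : Fin n → Bool => (Finset.univ.filter (fun i => b i)).card ≤ d)).sup'
          ⟨fun _ => false, by simp⟩
          (fun b => |MvPolynomial.eval (fun i => if b i then (1 : ℝ) else 0) φ|)) := by
  have hd : d ≤ Fintype.card (Fin n) := by rw [Fintype.card_fin]; omega
  rw [show n.choose d = (Fintype.card (Fin n)).choose d by rw [Fintype.card_fin]]
  exact abs_eval_one_le hd hdeg fun u hu =>
    le_sup'_of_le _ (b := fun i => decide (i ∈ u)) (by simpa using hu) (by simp)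
end

section
/- For any integer d ≥ 0 and real n > 1, there exists a univariate polynomial p of degree at most d such that (1−ε)/t ≤ p(t) ≤ (1+ε)/t for all t ∈ [1, n], where ε = 1/T_{d+1}((n+1)/(n−1)). -/
open Polynomial Polynomial.Chebyshev

private lemma natDegree_T_le' : ∀ k : ℕ, (T ℝ (k : ℤ)).natDegree ≤ k := by
  intro k
  induction k using Nat.twoStepInduction with
  | zero => simp [T_zero]
  | one => simp [T_one]
  | more k ih1 ih2 =>
    have hcast : ((k + 2 : ℕ) : ℤ) = (k : ℤ) + 2 := by push_cast; ring
    rw [hcast, T_add_two]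
    refine le_trans (natDegree_sub_le _ _) (max_le ?_ ?_)
    · calc (2 * X * T ℝ ((k:ℤ)+1)).natDegree
          ≤ (2 * X : ℝ[X]).natDegree + (T ℝ ((k:ℤ)+1)).natDegree := natDegree_mul_le
        _ ≤ ((2:ℝ[X]).natDegree + (X:ℝ[X]).natDegree) + (T ℝ ((k:ℤ)+1)).natDegree := by
            gcongr; exact natDegree_mul_le
        _ ≤ (0 + 1) + (k+1) := by
            gcongr
            · simp
            · simp
            · have : ((k:ℤ)+1) = ((k+1 : ℕ) : ℤ) := by push_cast; ring
              rw [this]; exact ih2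
        _ ≤ k + 2 := by omega
    · exact le_trans ih1 (by omega)

private lemma one_le_T_eval (x : ℝ) (hx : 1 ≤ x) :
    ∀ k : ℕ, 1 ≤ (T ℝ (k : ℤ)).eval x ∧ (T ℝ (k : ℤ)).eval x ≤ (T ℝ ((k : ℤ) + 1)).eval x := by
  intro k
  induction k with
  | zero => simp [T_zero, T_one, hx]
  | succ k ih =>
    obtain ⟨h1, h2⟩ := ih
    have hcast : ((k + 1 : ℕ) : ℤ) = (k : ℤ) + 1 := by push_cast; ring
    rw [hcast]
    constructor
    · linarith
    · have hrec : T ℝ ((k:ℤ) + 2) = 2 * X * T ℝ ((k:ℤ) + 1) - T ℝ k := T_add_two ℝ k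
      have : ((k:ℤ) + 1 + 1) = (k:ℤ) + 2 := by ring
      rw [this, hrec]
      simp only [eval_sub, eval_mul, eval_ofNat, eval_X]
      nlinarith

private lemma abs_T_eval_le_one (u : ℝ) (hu : |u| ≤ 1) (k : ℤ) :
    |(T ℝ k).eval u| ≤ 1 := by
  rw [abs_le] at hu
  have : u = Real.cos (Real.arccos u) := (Real.cos_arccos hu.1 hu.2).symm
  rw [this, T_real_cos]
  exact Real.abs_cos_le_one _

/-- For any integer `d ≥ 0` and real `n > 1`, there is a polynomial `p` of degree at most `d`
with `(1−ε)/t ≤ p(t) ≤ (1+ε)/t` on `[1,n]`, where `ε = 1/T_{d+1}((n+1)/(n−1))`. -/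
theorem exists_reciprocal_approx (d : ℕ) (n : ℝ) (hn : 1 < n) :
    ∃ p : Polynomial ℝ, p.natDegree ≤ d ∧
      ∀ t ∈ Set.Icc (1 : ℝ) n,
        (1 - 1 / (Polynomial.Chebyshev.T ℝ (d + 1)).eval ((n + 1) / (n - 1))) / t
          ≤ p.eval t ∧
        p.eval t ≤
          (1 + 1 / (Polynomial.Chebyshev.T ℝ (d + 1)).eval ((n + 1) / (n - 1))) / t := by
  have hn1 : (0:ℝ) < n - 1 := by linarith
  set m : ℝ := (n + 1) / (n - 1) with hm_def
  have hm : 1 ≤ m := by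
    rw [hm_def, le_div_iff₀ hn1]; linarith
  set A : ℝ := (T ℝ ((d:ℤ) + 1)).eval m with hA_def
  have hA : 1 ≤ A := by
    have := (one_le_T_eval m hm (d+1)).1
    rwa [show (((d+1:ℕ)):ℤ) = (d:ℤ)+1 by push_cast; ring] at this
  have hA0 : 0 < A := by linarith
  set L : ℝ[X] := C m - C (2 / (n - 1)) * X with hL_def
  set r : ℝ[X] := (T ℝ ((d:ℤ) + 1)).comp L with hr_def
  set s : ℝ[X] := C A - r with hs_def
  have hs0 : s.IsRoot 0 := by
    simp [hs_def, hr_def, hL_def, IsRoot, eval_comp, hA_def]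
  have hfact : X * (s /ₘ X) = s := by
    have := (mul_divByMonic_eq_iff_isRoot (p := s) (a := (0:ℝ))).2 hs0
    simpa using this
  refine ⟨C A⁻¹ * (s /ₘ X), ?_, ?_⟩
  · -- degree bound
    refine le_trans natDegree_mul_le ?_
    have hsdeg : s.natDegree ≤ d + 1 := by
      refine le_trans (natDegree_sub_le _ _) (max_le (by simp) ?_)
      refine le_trans natDegree_comp_le ?_
      have hT : (T ℝ ((d:ℤ) + 1)).natDegree ≤ d + 1 := by
        have := natDegree_T_le' (d+1)
        rwa [show (((d+1:ℕ)):ℤ) = (d:ℤ)+1 by push_cast; ring] at this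
      have hLdeg : L.natDegree ≤ 1 := by
        refine le_trans (natDegree_sub_le _ _) (max_le (by simp) ?_)
        refine le_trans natDegree_mul_le ?_
        simp
      calc (T ℝ ((d:ℤ)+1)).natDegree * L.natDegree ≤ (d+1) * 1 := by
            exact Nat.mul_le_mul hT hLdeg
        _ = d + 1 := by ring
    have := natDegree_divByMonic s (monic_X (R := ℝ))
    rw [natDegree_C, zero_add, this, natDegree_X]
    omega
  · intro t ht
    obtain ⟨ht1, htn⟩ := ht
    have ht0 : 0 < t := by linarith
    have heval : t * (s /ₘ X).eval t = s.eval t := by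
      have := congrArg (eval t) hfact
      simpa using this
    have hLt : |L.eval t| ≤ 1 := by
      have : L.eval t = (n + 1 - 2 * t) / (n - 1) := by
        simp [hL_def, hm_def]; ring
      rw [this, abs_div, abs_of_pos hn1, div_le_one hn1, abs_le]
      constructor <;> linarith
    have hc : |r.eval t| ≤ 1 := by
      rw [hr_def, eval_comp]
      exact abs_T_eval_le_one _ hLt _
    rw [abs_le] at hc
    have hpeval : (C A⁻¹ * (s /ₘ X)).eval t = A⁻¹ * (s.eval t / t) := by
      rw [eval_mul, eval_C, ← heval]
      field_simp
    have hst : s.eval t = A - r.eval t := by simp [hs_def]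
    rw [hpeval, hst]
    set c := r.eval t
    have hinv : (0:ℝ) ≤ A⁻¹ := inv_nonneg.mpr hA0.le
    have key1 : 1 - 1 / A ≤ A⁻¹ * (A - c) := by
      rw [mul_sub, inv_mul_cancel₀ hA0.ne']
      have h := mul_le_mul_of_nonneg_left hc.2 hinv
      rw [one_div]; linarith
    have key2 : A⁻¹ * (A - c) ≤ 1 + 1 / A := by
      rw [mul_sub, inv_mul_cancel₀ hA0.ne']
      have h := mul_le_mul_of_nonneg_left hc.1 hinv
      rw [one_div]; linarith
    have hrw : A⁻¹ * ((A - c) / t) = (A⁻¹ * (A - c)) / t := by ring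
    rw [hrw]
    exact ⟨(div_le_div_iff_of_pos_right ht0).2 key1, (div_le_div_iff_of_pos_right ht0).2 key2⟩
end

section
/- For any real n > 1, there exists a univariate polynomial p of degree at most √(2(n−1)) such that 1/(2t) ≤ p(t) ≤ 1/t for all t ∈ [1, n]. -/
/-!
Transport the Chebyshev polynomial `T_m`, `m = ⌊√(2(n-1))⌋ + 1`, affinely so that `[1, n]` is
mapped onto `[-1, 1]`; the result `q` satisfies `|q| ≤ 1` on `[1, n]`. The point `0` lands at
`x = 1 + 2/(n-1)`, and for `x ≥ 1` the recurrence `T_{k+2} - T_{k+1} = T_{k+1} - T_k + 2(x-1)T_{k+1}`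
with `T_{k+1}(x) ≥ 1` gives `T_m(x) ≥ 1 + m²(x-1)`, so `M = q(0) ≥ 1 + 2m²/(n-1) > 5`.
Then `M - q` vanishes at `0`, so `(M - q(t)) / ((M + 1) t)` is a polynomial of degree `< m`, and
on `[1, n]` it lies between `(M - 1)/((M + 1) t) ≥ 1/(2t)` and `1/t`.
-/

open Polynomial

namespace Polynomial.Chebyshev

theorem two_mul_add_one_mul_sub_one_le_eval_T_succ_sub (k : ℕ) {x : ℝ} (hx : 1 ≤ x) :
    (2 * k + 1) * (x - 1) ≤ (T ℝ (k + 1)).eval x - (T ℝ k).eval x := by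
  induction k with
  | zero => simp
  | succ k ih =>
    have hT : 1 ≤ (T ℝ (k + 1)).eval x := one_le_eval_T_real _ hx
    have hrec : (T ℝ ((k : ℤ) + 1 + 1)).eval x
        = 2 * x * (T ℝ (k + 1)).eval x - (T ℝ k).eval x := by
      rw [add_assoc, one_add_one_eq_two, T_add_two]
      simp
    push_cast
    rw [hrec]
    nlinarith

theorem one_add_sq_mul_sub_one_le_eval_T (k : ℕ) {x : ℝ} (hx : 1 ≤ x) :
    1 + (k : ℝ) ^ 2 * (x - 1) ≤ (T ℝ k).eval x := by
  induction k with
  | zero => simp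
  | succ k ih =>
    have := two_mul_add_one_mul_sub_one_le_eval_T_succ_sub k hx
    push_cast
    nlinarith

/-- `T_m` transported to `[a, b]` by the affine map sending `a ↦ 1` and `b ↦ -1`. -/
noncomputable def shiftedT (a b : ℝ) (m : ℕ) : ℝ[X] :=
  (T ℝ m).comp (Polynomial.C (-2 / (b - a)) * X + Polynomial.C ((a + b) / (b - a)))

variable {a b : ℝ} (m : ℕ)

theorem eval_shiftedT (t : ℝ) :
    (shiftedT a b m).eval t = (T ℝ m).eval ((a + b - 2 * t) / (b - a)) := by
  simp only [shiftedT, eval_comp, eval_add, eval_mul, eval_C, eval_X]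
  congr 1
  ring

theorem natDegree_shiftedT_le : (shiftedT a b m).natDegree ≤ m :=
  calc (shiftedT a b m).natDegree ≤ (T ℝ m).natDegree * 1 :=
        natDegree_comp_le.trans (by gcongr; exact natDegree_linear_le)
    _ = m := by simp [natDegree_T]

theorem abs_eval_shiftedT_le_one (hab : a < b) {t : ℝ} (ht : t ∈ Set.Icc a b) :
    |(shiftedT a b m).eval t| ≤ 1 := by
  have hba : 0 < b - a := sub_pos.mpr hab
  rw [eval_shiftedT]
  refine abs_eval_T_real_le_one _ (abs_le.mpr ⟨?_, ?_⟩)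
  · rw [le_div_iff₀ hba]
    linarith [ht.2]
  · rw [div_le_one hba]
    linarith [ht.1]

theorem one_add_sq_mul_le_eval_shiftedT_zero (ha : 0 ≤ a) (hab : a < b) :
    1 + (m : ℝ) ^ 2 * (2 * a / (b - a)) ≤ (shiftedT a b m).eval 0 := by
  have hba : 0 < b - a := sub_pos.mpr hab
  have h := one_add_sq_mul_sub_one_le_eval_T m (x := (a + b) / (b - a))
    (by rw [one_le_div hba]; linarith)
  rw [eval_shiftedT, mul_zero, sub_zero]
  convert h using 3
  field_simp
  ring

end Polynomial.Chebyshev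

theorem exists_half_reciprocal_approx_of_abs_eval_le_one (q : ℝ[X]) {s : Set ℝ}
    (hs : ∀ t ∈ s, 0 < t) (hq : ∀ t ∈ s, |q.eval t| ≤ 1) (hq₀ : 3 ≤ q.eval 0) :
    ∃ p : ℝ[X], p.natDegree ≤ q.natDegree - 1 ∧
      ∀ t ∈ s, 1 / (2 * t) ≤ p.eval t ∧ p.eval t ≤ 1 / t := by
  set M := q.eval 0
  set r := (C M - q).divX
  have hr : ∀ t, t * r.eval t = M - q.eval t := fun t => by
    have h := congrArg (eval t) (X_mul_divX_add (C M - q))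
    simpa [coeff_zero_eq_eval_zero, M] using h
  refine ⟨C (M + 1)⁻¹ * r, ?_, fun t ht => ?_⟩
  · calc (C (M + 1)⁻¹ * r).natDegree ≤ r.natDegree := natDegree_C_mul_le _ _
      _ = (C M - q).natDegree - 1 := natDegree_divX_eq_natDegree_tsub_one
      _ ≤ q.natDegree - 1 := by
        gcongr
        exact (natDegree_sub_le _ _).trans (max_le (by simp) le_rfl)
  · have ht₀ := hs t ht
    obtain ⟨hq_lower, hq_upper⟩ := abs_le.mp (hq t ht)
    have hp : (C (M + 1)⁻¹ * r).eval t = (M - q.eval t) / ((M + 1) * t) := by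
      rw [eval_mul, eval_C, ← hr]
      field_simp
    rw [hp, div_le_div_iff₀ (by positivity) (by positivity),
      div_le_div_iff₀ (by positivity) ht₀]
    constructor <;> nlinarith

/-- For any real `n > 1`, there is a polynomial `p` of degree at most `√(2(n−1))` with
`1/(2t) ≤ p(t) ≤ 1/t` for all `t ∈ [1,n]`. -/
theorem exists_half_reciprocal_approx (n : ℝ) (hn : 1 < n) :
    ∃ p : Polynomial ℝ, (p.natDegree : ℝ) ≤ Real.sqrt (2 * (n - 1)) ∧
      ∀ t ∈ Set.Icc (1 : ℝ) n, 1 / (2 * t) ≤ p.eval t ∧ p.eval t ≤ 1 / t := by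
  set m := ⌊√(2 * (n - 1))⌋₊ + 1
  have hn₁ : 0 < n - 1 := sub_pos.mpr hn
  have hm : 2 * (n - 1) < (m : ℝ) ^ 2 := by
    rw [← Real.sq_sqrt (by positivity : (0 : ℝ) ≤ 2 * (n - 1))]
    have h := Nat.lt_floor_add_one √(2 * (n - 1))
    exact_mod_cast pow_lt_pow_left₀ h (by positivity) two_ne_zero
  have hq_zero : 3 ≤ (Chebyshev.shiftedT 1 n m).eval 0 := by
    have h := Chebyshev.one_add_sq_mul_le_eval_shiftedT_zero m zero_le_one hn
    have h_four : 4 < (m : ℝ) ^ 2 * (2 * 1 / (n - 1)) := by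
      rw [mul_div_assoc', lt_div_iff₀ hn₁]
      linarith
    linarith
  obtain ⟨p, hp_deg, hp⟩ := exists_half_reciprocal_approx_of_abs_eval_le_one _
    (fun t ht => by linarith [ht.1]) (fun t => Chebyshev.abs_eval_shiftedT_le_one m hn) hq_zero
  refine ⟨p, ?_, hp⟩
  have hp_deg' : p.natDegree ≤ ⌊√(2 * (n - 1))⌋₊ :=
    hp_deg.trans (Nat.sub_le_sub_right (Chebyshev.natDegree_shiftedT_le m) 1)
  calc (p.natDegree : ℝ) ≤ ⌊√(2 * (n - 1))⌋₊ := by exact_mod_cast hp_deg'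
    _ ≤ √(2 * (n - 1)) := Nat.floor_le (Real.sqrt_nonneg _)
end

section
/- Let d ≥ 1 be an integer. For every integer D ≥ 0, the polynomial p(t) = Σ_{i=0}^D C(i+d−1, i)(1−t)^i of degree at most D satisfies: (a) |1/t^d − p(t)| ≤ |1−t|^{D+1} · C(D+d, d) · d for all t ∈ [d/(d+D), 2 − d/(d+D)]; and (b) |p(t)| ≤ C(D+d, d) for all t ∈ [0, 2]. -/
/-!
Multiplying `p` by `t ^ d` telescopes (Pascal's rule, one induction on `d`) to
`t ^ d * p t = 1 - (1 - t) ^ (D + 1) * ∑_{k < d} C(D + k, D) t ^ k`,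
so the error `1 / t ^ d - p t` is `(1 - t) ^ (D + 1)` times `∑_{k < d} C(D + k, D) / t ^ (d - k)`.
Each of these `d` terms is at most `C(D + d, D)` once `t ≥ d / (d + D)`, because the ratio
`C(D + k + 1, D) / C(D + k, D) = (D + k + 1) / (k + 1)` is at least `(d + D) / d` for `k < d`.
On `[0, 2]` we have `|1 - t| ≤ 1`, and the coefficients of `p` sum to `C(D + d, d)` (hockey stick).
-/

open Finset Polynomial

theorem sum_range_choose_add_sub_one (d D : ℕ) :
    ∑ i ∈ range (D + 1), (i + d - 1).choose i = (D + d).choose d := by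
  rcases d with _ | d
  · simp [sum_range_succ']
  · simpa [Nat.choose_symm_add, add_assoc] using Nat.sum_range_add_choose D d

theorem natDegree_sum_smul_one_sub_X_pow_le {R : Type*} [CommRing R] (c : ℕ → R) (D : ℕ) :
    (∑ i ∈ range (D + 1), c i • (1 - X : R[X]) ^ i).natDegree ≤ D := by
  refine natDegree_sum_le_of_forall_le _ _ fun i hi => ?_
  have hX : (1 - X : R[X]).natDegree ≤ 1 := by compute_degree
  calc (c i • (1 - X : R[X]) ^ i).natDegree ≤ ((1 - X : R[X]) ^ i).natDegree :=
        natDegree_smul_le _ _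
    _ ≤ i * 1 := natDegree_pow_le_of_le i hX
    _ ≤ D := by rw [mem_range] at hi; omega

section CommRing
variable {R : Type*} [CommRing R]

theorem mul_sum_choose_mul_one_sub_pow (d D : ℕ) (t : R) :
    t * ∑ i ∈ range (D + 1), ((i + d).choose i : R) * (1 - t) ^ i =
      ∑ i ∈ range (D + 1), ((i + d - 1).choose i : R) * (1 - t) ^ i -
        ((D + d).choose D : R) * (1 - t) ^ (D + 1) := by
  induction D with
  | zero => simp
  | succ D ih =>
    rw [sum_range_succ, sum_range_succ (fun i => ((i + d - 1).choose i : R) * (1 - t) ^ i),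
      show D + 1 + d - 1 = D + d by omega]
    have pascal :
        ((D + 1 + d).choose (D + 1) : R) = (D + d).choose D + (D + d).choose (D + 1) := by
      rw [show D + 1 + d = D + d + 1 by ring, Nat.choose_succ_succ', Nat.cast_add]
    linear_combination ih + (1 - t) ^ (D + 1) * pascal

theorem pow_mul_sum_choose_mul_one_sub_pow (d D : ℕ) (t : R) :
    t ^ d * ∑ i ∈ range (D + 1), ((i + d - 1).choose i : R) * (1 - t) ^ i =
      1 - (1 - t) ^ (D + 1) * ∑ k ∈ range d, ((D + k).choose D : R) * t ^ k := by
  induction d with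
  | zero =>
    simp [sum_range_succ']
  | succ d ih =>
    simp only [add_tsub_cancel_right, ← add_assoc]
    rw [sum_range_succ (fun k => ((D + k).choose D : R) * t ^ k)]
    linear_combination t ^ d * mul_sum_choose_mul_one_sub_pow d D t + ih

end CommRing

theorem div_add_le_div_add {𝕜 : Type*} [Field 𝕜] [LinearOrder 𝕜] [IsStrictOrderedRing 𝕜]
    {a b c : 𝕜} (ha : 0 < a) (hab : a ≤ b) (hc : 0 ≤ c) :
    a / (a + c) ≤ b / (b + c) := by
  rw [div_le_div_iff₀ (by positivity) (by linarith)]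
  nlinarith

theorem choose_le_choose_succ_mul (D k : ℕ) {t : ℝ} (ht : (k + 1 : ℝ) / (k + 1 + D) ≤ t) :
    ((D + k).choose D : ℝ) ≤ (D + k + 1).choose D * t := by
  have hrec : ((D + k).choose D : ℝ) = (D + k + 1).choose D * ((k + 1) / (k + 1 + D)) := by
    have h := Nat.choose_mul_succ_eq (D + k) D
    rw [show D + k + 1 - D = k + 1 by omega] at h
    rw [mul_div_assoc', eq_div_iff (by positivity)]
    exact_mod_cast
      (by linarith [h] : (D + k).choose D * (k + 1 + D) = (D + k + 1).choose D * (k + 1))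
  rw [hrec]
  gcongr

theorem choose_le_choose_mul_pow {d D j k : ℕ} (hkj : k + j ≤ d) {t : ℝ}
    (ht : (d : ℝ) / (d + D) ≤ t) :
    ((D + k).choose D : ℝ) ≤ (D + k + j).choose D * t ^ j := by
  have ht0 : 0 ≤ t := le_trans (by positivity) ht
  induction j generalizing k with
  | zero => simp
  | succ j ih =>
    have hstep : (k + 1 : ℝ) / (k + 1 + D) ≤ t :=
      le_trans (div_add_le_div_add (by positivity) (by exact_mod_cast (by omega : k + 1 ≤ d))
        (Nat.cast_nonneg D)) ht
    calc ((D + k).choose D : ℝ) ≤ (D + k + 1).choose D * t := choose_le_choose_succ_mul D k hstep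
      _ ≤ (D + (k + 1) + j).choose D * t ^ j * t := by gcongr; exact ih (k := k + 1) (by omega)
      _ = (D + k + (j + 1)).choose D * t ^ (j + 1) := by
        rw [pow_succ, show D + (k + 1) + j = D + k + (j + 1) by omega, mul_assoc]

theorem one_div_pow_sub_sum_choose_mul_one_sub_pow {t : ℝ} (ht : t ≠ 0) (d D : ℕ) :
    1 / t ^ d - ∑ i ∈ range (D + 1), ((i + d - 1).choose i : ℝ) * (1 - t) ^ i =
      (1 - t) ^ (D + 1) * ∑ k ∈ range d, ((D + k).choose D : ℝ) / t ^ (d - k) := by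
  have hsum : ∑ k ∈ range d, ((D + k).choose D : ℝ) / t ^ (d - k) =
      (∑ k ∈ range d, ((D + k).choose D : ℝ) * t ^ k) / t ^ d := by
    rw [sum_div]
    refine sum_congr rfl fun k hk => ?_
    rw [div_eq_div_iff (by positivity) (by positivity), mul_assoc, ← pow_add,
      Nat.add_sub_cancel' (mem_range.mp hk).le]
  have hinv : 1 / t ^ d * t ^ d = 1 := one_div_mul_cancel (by positivity)
  rw [hsum, mul_div_assoc', eq_div_iff (by positivity)]
  linear_combination hinv - pow_mul_sum_choose_mul_one_sub_pow d D t

theorem abs_one_div_pow_sub_sum_choose_mul_one_sub_pow_le {d D : ℕ} (hd : 0 < d) {t : ℝ}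
    (ht : (d : ℝ) / (d + D) ≤ t) :
    |1 / t ^ d - ∑ i ∈ range (D + 1), ((i + d - 1).choose i : ℝ) * (1 - t) ^ i| ≤
      |1 - t| ^ (D + 1) * (D + d).choose d * d := by
  have ht0 : 0 < t := lt_of_lt_of_le (by positivity) ht
  have hterm : ∀ k ∈ range d, ((D + k).choose D : ℝ) / t ^ (d - k) ≤ (D + d).choose d := by
    intro k hk
    have hkd := mem_range.mp hk
    rw [div_le_iff₀ (by positivity), ← Nat.choose_symm_add (a := D) (b := d)]
    simpa [Nat.add_sub_cancel' hkd.le, add_assoc] using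
      choose_le_choose_mul_pow (j := d - k) (k := k) (by omega) ht
  have hsum_nonneg : 0 ≤ ∑ k ∈ range d, ((D + k).choose D : ℝ) / t ^ (d - k) :=
    sum_nonneg fun k _ => by positivity
  rw [one_div_pow_sub_sum_choose_mul_one_sub_pow ht0.ne', abs_mul, abs_pow, mul_assoc,
    abs_of_nonneg hsum_nonneg]
  gcongr
  simpa [mul_comm] using sum_le_card_nsmul _ _ _ hterm

theorem abs_sum_choose_mul_pow_le (d D : ℕ) {x : ℝ} (hx : |x| ≤ 1) :
    |∑ i ∈ range (D + 1), ((i + d - 1).choose i : ℝ) * x ^ i| ≤ (D + d).choose d := by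
  calc |∑ i ∈ range (D + 1), ((i + d - 1).choose i : ℝ) * x ^ i|
      ≤ ∑ i ∈ range (D + 1), |((i + d - 1).choose i : ℝ) * x ^ i| := abs_sum_le_sum_abs _ _
    _ ≤ ∑ i ∈ range (D + 1), ((i + d - 1).choose i : ℝ) := by
      gcongr with i
      rw [abs_mul, abs_pow, Nat.abs_cast]
      exact mul_le_of_le_one_right (by positivity) (pow_le_one₀ (abs_nonneg x) hx)
    _ = (D + d).choose d := by exact_mod_cast sum_range_choose_add_sub_one d D

/-- For `d ≥ 1` and `D ≥ 0`, the polynomial `p(t) = Σ_{i=0}^D C(i+d−1,i)(1−t)^i` of degree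
at most `D` satisfies `|1/t^d − p(t)| ≤ |1−t|^{D+1}·C(D+d,d)·d` on `[d/(d+D), 2 − d/(d+D)]`
and `|p(t)| ≤ C(D+d,d)` on `[0,2]`. -/
theorem reciprocal_power_approx (d D : ℕ) (hd : 1 ≤ d) :
    ∀ p : Polynomial ℝ,
      p = ∑ i ∈ Finset.range (D + 1), ((i + d - 1).choose i : ℝ) • ((1 - Polynomial.X) ^ i) →
      p.natDegree ≤ D ∧
      (∀ t : ℝ, (d : ℝ) / (d + D) ≤ t → t ≤ 2 - (d : ℝ) / (d + D) →
        |1 / t ^ d - p.eval t| ≤ |1 - t| ^ (D + 1) * ((D + d).choose d) * d) ∧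
      (∀ t : ℝ, 0 ≤ t → t ≤ 2 → |p.eval t| ≤ ((D + d).choose d : ℝ)) := by
  intro p hp
  have heval (t : ℝ) :
      p.eval t = ∑ i ∈ range (D + 1), ((i + d - 1).choose i : ℝ) * (1 - t) ^ i := by
    simp [hp, eval_finsetSum]
  refine ⟨hp ▸ natDegree_sum_smul_one_sub_X_pow_le _ D, fun t ht _ => ?_, fun t ht0 ht2 => ?_⟩
  · rw [heval]
    exact abs_one_div_pow_sub_sum_choose_mul_one_sub_pow_le hd ht
  · rw [heval]
    exact abs_sum_choose_mul_pow_le d D (abs_le.mpr ⟨by linarith, by linarith⟩)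
end

section
/- Let n and m be integers with 0 ≤ m < n. Set d = ⌈(π/4)·√(n/(n−m))⌉ and let L be the affine map with L(n) = 1 and L(m) = cos(π/(2d)). Then the polynomial T_{n,m}(t) = T_d(L(t)) satisfies T_{n,m}(n) = 1, T_{n,m}(m) = 0, |T_{n,m}(t)| ≤ 1 for all t ∈ [0, n], and deg T_{n,m} ≤ ⌈(π/4)·√(n/(n−m))⌉. -/
set_option maxHeartbeats 800000

open Polynomial Real

lemma chebT_natDegree_le (k : ℕ) : (Polynomial.Chebyshev.T ℝ (k : ℤ)).natDegree ≤ k := by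
  induction k using Nat.twoStepInduction with
  | zero => simp [Polynomial.Chebyshev.T_zero]
  | one => simp [Polynomial.Chebyshev.T_one]
  | more k ih1 ih2 =>
    have hc : ((k + 2 : ℕ) : ℤ) = (k : ℤ) + 2 := by push_cast; ring
    rw [hc, Polynomial.Chebyshev.T_add_two]
    refine (Polynomial.natDegree_sub_le _ _).trans (max_le ?_ (ih1.trans (by omega)))
    refine Polynomial.natDegree_mul_le.trans ?_
    have h1 : (2 * Polynomial.X : ℝ[X]).natDegree ≤ 1 :=
      Polynomial.natDegree_mul_le.trans (by simp)
    have h2 : (Polynomial.Chebyshev.T ℝ ((k:ℤ)+1)).natDegree ≤ k + 1 := by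
      have := ih2; rwa [show ((k+1:ℕ):ℤ) = (k:ℤ)+1 by push_cast; ring] at this
    omega

lemma chebT_abs_le (k : ℕ) {x : ℝ} (hx : x ∈ Set.Icc (-1:ℝ) 1) :
    |(Polynomial.Chebyshev.T ℝ (k : ℤ)).eval x| ≤ 1 := by
  obtain ⟨h1, h2⟩ := hx
  rw [← Real.cos_arccos h1 h2, Polynomial.Chebyshev.T_real_cos]
  exact Real.abs_cos_le_one _

/-- Lemma on producing a single zero: for `0 ≤ m < n`, with `d = ⌈(π/4)√(n/(n−m))⌉` and `L`
the affine map sending `n ↦ 1` and `m ↦ cos(π/(2d))`, the polynomial `T_{n,m} = T_d ∘ L`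
satisfies `T_{n,m}(n) = 1`, `T_{n,m}(m) = 0`, `|T_{n,m}(t)| ≤ 1` on `[0,n]`, and has degree
at most `⌈(π/4)√(n/(n−m))⌉`. -/
theorem exists_single_zero_chebyshev (n m : ℕ) (hm : m < n)
    (d : ℕ) (hd : d = ⌈Real.pi / 4 * Real.sqrt ((n : ℝ) / ((n : ℝ) - m))⌉₊)
    (L : ℝ → ℝ)
    (hL : ∀ t, L t = Real.cos (Real.pi / (2 * d)) +
      (t - m) * (1 - Real.cos (Real.pi / (2 * d))) / ((n : ℝ) - m)) :
    ∃ q : Polynomial ℝ,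
      (∀ t : ℝ, q.eval t = (Polynomial.Chebyshev.T ℝ d).eval (L t)) ∧
      q.eval (n : ℝ) = 1 ∧
      q.eval (m : ℝ) = 0 ∧
      (∀ t ∈ Set.Icc (0 : ℝ) n, |q.eval t| ≤ 1) ∧
      q.natDegree ≤ ⌈Real.pi / 4 * Real.sqrt ((n : ℝ) / ((n : ℝ) - m))⌉₊ := by
  have hnm : (0:ℝ) < (n:ℝ) - m := by
    have : (m:ℝ) < n := by exact_mod_cast hm
    linarith
  have hn0 : (0:ℝ) < n := lt_of_le_of_lt (by positivity) (by exact_mod_cast hm : (m:ℝ) < n)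
  set θ : ℝ := Real.pi / (2 * d) with hθ
  set c : ℝ := Real.cos θ with hc
  set s : ℝ := (1 - c) / ((n:ℝ) - m) with hs
  -- d ≥ 1
  have hratio : (1:ℝ) ≤ (n:ℝ) / ((n:ℝ) - m) := by
    rw [le_div_iff₀ hnm]; have : (0:ℝ) ≤ m := by positivity
    linarith
  have hx0 : (0:ℝ) < Real.pi / 4 * Real.sqrt ((n : ℝ) / ((n : ℝ) - m)) := by
    have : (0:ℝ) < Real.sqrt ((n : ℝ) / ((n : ℝ) - m)) :=
      Real.sqrt_pos.mpr (by linarith)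
    positivity
  have hd1 : 1 ≤ d := by rw [hd]; exact Nat.one_le_ceil_iff.mpr hx0
  have hdR : (0:ℝ) < d := by exact_mod_cast hd1
  -- θ bound: θ ≤ 2 * sqrt ((n-m)/n)
  have hdge : Real.pi / 4 * Real.sqrt ((n : ℝ) / ((n : ℝ) - m)) ≤ d := by
    rw [hd]; exact Nat.le_ceil _
  have hsq : Real.sqrt ((n : ℝ) / ((n : ℝ) - m)) ^ 2 = (n:ℝ) / ((n:ℝ) - m) :=
    Real.sq_sqrt (by linarith)
  have hsqpos : (0:ℝ) < Real.sqrt ((n : ℝ) / ((n : ℝ) - m)) :=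
    Real.sqrt_pos.mpr (by linarith)
  have hθsq : θ ^ 2 ≤ 4 * ((n:ℝ) - m) / n := by
    have hθle : θ ≤ 2 / Real.sqrt ((n : ℝ) / ((n : ℝ) - m)) := by
      rw [hθ, div_le_div_iff₀ (by positivity) hsqpos]
      nlinarith [Real.pi_pos]
    have hθpos : 0 < θ := by rw [hθ]; positivity
    have := mul_self_le_mul_self (le_of_lt hθpos) hθle
    calc θ ^ 2 ≤ (2 / Real.sqrt ((n : ℝ) / ((n : ℝ) - m))) ^ 2 := by
          nlinarith
      _ = 4 / ((n:ℝ) / ((n:ℝ) - m)) := by rw [div_pow, hsq]; norm_num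
      _ = 4 * ((n:ℝ) - m) / n := by field_simp
  -- c lower bound
  have hclb : 1 - θ^2/2 ≤ c := Real.one_sub_sq_div_two_le_cos
  have hckey : 2*(m:ℝ) - n ≤ n * c := by
    have h1 : (n:ℝ) * (1 - θ^2/2) ≤ n * c := by nlinarith
    have h2 : (n:ℝ) * θ^2 ≤ 4*((n:ℝ)-m) := by
      have := mul_le_mul_of_nonneg_left hθsq (le_of_lt hn0)
      rw [mul_div_assoc'] at this
      calc (n:ℝ) * θ^2 ≤ (n:ℝ) * (4*((n:ℝ)-m)) / n := this
        _ = 4*((n:ℝ)-m) := by field_simp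
    nlinarith
  have hc1 : c ≤ 1 := Real.cos_le_one _
  have hs0 : 0 ≤ s := by
    rw [hs]; apply div_nonneg _ (le_of_lt hnm); linarith
  have hsid : s * ((n:ℝ) - m) = 1 - c := by rw [hs]; field_simp
  -- polynomial
  refine ⟨(Polynomial.Chebyshev.T ℝ d).comp (Polynomial.C s * Polynomial.X +
    Polynomial.C (c - m * s)), ?_, ?_, ?_, ?_, ?_⟩
  · intro t
    rw [Polynomial.eval_comp, hL t]
    congr 1
    simp [hs]
    field_simp
    ring
  case refine_2 =>
    rw [Polynomial.eval_comp]
    have : (Polynomial.C s * Polynomial.X + Polynomial.C (c - m * s)).eval (n:ℝ) = 1 := by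
      simp [hs]; field_simp; ring
    rw [this]
    have := Polynomial.Chebyshev.T_real_cos 0 (d:ℤ)
    simpa using this
  case refine_3 =>
    rw [Polynomial.eval_comp]
    have : (Polynomial.C s * Polynomial.X + Polynomial.C (c - m * s)).eval (m:ℝ) = c := by
      simp; ring
    rw [this, hc, Polynomial.Chebyshev.T_real_cos]
    rw [show ((d:ℤ):ℝ) * θ = Real.pi/2 by push_cast; rw [hθ]; field_simp]
    exact Real.cos_pi_div_two
  case refine_4 =>
    intro t ht
    obtain ⟨ht0, htn⟩ := ht
    rw [Polynomial.eval_comp]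
    apply chebT_abs_le
    simp only [Polynomial.eval_add, Polynomial.eval_mul, Polynomial.eval_C, Polynomial.eval_X]
    constructor
    · nlinarith [mul_nonneg hs0 ht0]
    · have hn' : s * n + (c - m*s) = 1 := by
        rw [hs]; field_simp; ring
      nlinarith [mul_le_mul_of_nonneg_left htn hs0]
  case refine_5 =>
    rw [← hd]
    refine Polynomial.natDegree_comp_le.trans ?_
    have h1 : (Polynomial.C s * Polynomial.X + Polynomial.C (c - m*s)).natDegree ≤ 1 := by
      refine (Polynomial.natDegree_add_le _ _).trans (max_le ?_ ?_)
      · exact Polynomial.natDegree_mul_le.trans (by simp)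
      · exact le_trans (le_of_eq (Polynomial.natDegree_C _)) (Nat.zero_le 1)
    have h2 := chebT_natDegree_le d
    calc (Polynomial.Chebyshev.T ℝ (d:ℤ)).natDegree *
          (Polynomial.C s * Polynomial.X + Polynomial.C (c - m*s)).natDegree
        ≤ d * 1 := Nat.mul_le_mul h2 h1
      _ = d := by omega
end

section
/- There is an absolute constant c > 0 such that for all integers n ≥ 1 and d ≥ 0 there exists a univariate polynomial p of degree at most d with p(n) = 1, |p(t)| ≤ exp(−c·d²/n) for t = 0, 1, …, n−1, and |p(t)| ≤ 1 for all t ∈ [0, n]. -/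
/-!
Every factor is a rescaled Chebyshev polynomial `T_k(x / b) / T_k(N / b)` with `0 < b ≤ N`: it
equals `1` at `N` and is bounded by `1` on `[0, N]`, hence so is any product of such factors.
Placing the zero `b cos (π / 2k)` of a factor at `n - j` needs only `k ≈ 2 √(n / j)`, so the top
`m ≈ d² / 100 n` integer points are killed with total degree `m + 4 √(n m) ≤ d / 2`. The remaining
degree `r ≥ d / 2` goes into one factor with `b = n - m - 1`, which on the surviving points is at
most `1 / T_r(1 + (m + 1) / b) ≤ 1 / cosh (r √((m + 1) / n))`; as `m + 1` exceeds both `1` and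
`d² / 100 n`, this is at most `exp (-d² / 64 n)`. When `d ≳ 5 n` the degree suffices to kill all
of `0, …, n - 1`.
-/

open Real Polynomial Polynomial.Chebyshev

namespace Real

lemma exp_le_cosh_of_sq_le {a u : ℝ} (h₁ : 8 * a ≤ u ^ 2) (h₂ : (3 * a) ^ 2 ≤ u ^ 2) :
    exp a ≤ cosh u := by
  wlog hu : 0 ≤ u generalizing u
  · rw [← cosh_abs]
    exact this (by rwa [sq_abs]) (by rwa [sq_abs]) (abs_nonneg u)
  rcases lt_or_ge a 0 with ha | ha
  · exact (exp_le_one_iff.2 ha.le).trans (one_le_cosh u)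
  rcases le_or_gt a (1 / 2) with ha' | ha'
  -- `exp a ≤ 1 / (1 - a) ≤ 1 + 2 a ≤ 1 + u² / 4 ≤ cosh u`
  · have hexp : exp a ≤ 1 + 2 * a := by
      refine (exp_bound_div_one_sub_of_interval ha (by linarith)).trans ?_
      rw [div_le_iff₀ (by linarith)]
      nlinarith
    have hcosh : 1 + u ^ 2 / 4 ≤ cosh u := by
      rw [cosh_eq]
      nlinarith [quadratic_le_exp_of_nonneg hu, add_one_le_exp (-u)]
    linarith
  -- `2 exp a ≤ exp (3 a) ≤ exp u`
  · have h₃ : 3 * a ≤ u := (pow_le_pow_iff_left₀ (by positivity) hu two_ne_zero).1 h₂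
    have h₄ : 2 ≤ exp (2 * a) := by linarith [add_one_le_exp (2 * a)]
    have h₅ : exp a * exp (2 * a) ≤ exp u := by
      rw [← exp_add]
      exact exp_le_exp.2 (by linarith)
    rw [cosh_eq]
    nlinarith [exp_pos a, exp_pos (-u)]

lemma cosh_sqrt_le_one_add {ε : ℝ} (h₀ : 0 ≤ ε) (h₁ : ε ≤ 1) : cosh √ε ≤ 1 + ε := by
  calc cosh √ε ≤ exp (ε / 2) := by
        simpa [sq_sqrt h₀] using cosh_le_exp_half_sq √ε
    _ ≤ 1 / (1 - ε / 2) := exp_bound_div_one_sub_of_interval (by positivity) (by linarith)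
    _ ≤ 1 + ε := by
      rw [div_le_iff₀ (by linarith)]
      nlinarith

end Real

namespace Polynomial.Chebyshev

lemma eval_T_real_eq_cosh_arcosh (k : ℤ) {x : ℝ} (hx : 1 ≤ x) :
    (T ℝ k).eval x = cosh (k * arcosh x) := by
  rw [← T_real_cosh, cosh_arcosh hx]

lemma monotoneOn_eval_T_real (k : ℤ) : MonotoneOn (T ℝ k).eval (Set.Ici 1) := by
  intro x hx y hy hxy
  dsimp only
  rw [eval_T_real_eq_cosh_arcosh k hx, eval_T_real_eq_cosh_arcosh k hy, cosh_le_cosh, abs_mul,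
    abs_mul, abs_of_nonneg (arcosh_nonneg hx), abs_of_nonneg (arcosh_nonneg hy)]
  gcongr
  exact (arcosh_le_arcosh (zero_lt_one.trans_le hx) (zero_lt_one.trans_le hy)).2 hxy

lemma cosh_mul_sqrt_sub_one_le_eval_T_real (k : ℤ) {x : ℝ} (hx₁ : 1 ≤ x) (hx₂ : x ≤ 2) :
    cosh (k * √(x - 1)) ≤ (T ℝ k).eval x := by
  rw [← T_real_cosh]
  refine monotoneOn_eval_T_real k (one_le_cosh _) hx₁ ?_
  linarith [cosh_sqrt_le_one_add (ε := x - 1) (by linarith) (by linarith)]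

lemma exp_le_eval_T_real (k : ℤ) {a x : ℝ} (hx₁ : 1 ≤ x) (hx₂ : x ≤ 2)
    (h₁ : 8 * a ≤ k ^ 2 * (x - 1)) (h₂ : (3 * a) ^ 2 ≤ k ^ 2 * (x - 1)) :
    exp a ≤ (T ℝ k).eval x := by
  have hu : ((k : ℝ) * √(x - 1)) ^ 2 = k ^ 2 * (x - 1) := by
    rw [mul_pow, sq_sqrt (by linarith)]
  exact (exp_le_cosh_of_sq_le (hu ▸ h₁) (hu ▸ h₂)).trans
    (cosh_mul_sqrt_sub_one_le_eval_T_real k hx₁ hx₂)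

end Polynomial.Chebyshev

def peakSubmonoid (N : ℝ) : Submonoid ℝ[X] where
  carrier := {p | p.eval N = 1 ∧ ∀ x ∈ Set.Icc 0 N, |p.eval x| ≤ 1}
  one_mem' := by simp
  mul_mem' {p q} hp hq := by
    refine ⟨by simp [hp.1, hq.1], fun x hx => ?_⟩
    rw [eval_mul, abs_mul]
    exact mul_le_one₀ (hp.2 x hx) (abs_nonneg _) (hq.2 x hx)

noncomputable def scaledChebyshev (k : ℕ) (b N : ℝ) : ℝ[X] :=
  C ((T ℝ k).eval (N / b))⁻¹ * (T ℝ k).comp (C b⁻¹ * X)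

section ScaledChebyshev

variable {k : ℕ} {b N : ℝ}

lemma eval_scaledChebyshev (x : ℝ) :
    (scaledChebyshev k b N).eval x = (T ℝ k).eval (x / b) / (T ℝ k).eval (N / b) := by
  rw [scaledChebyshev, eval_mul, eval_C, eval_comp, eval_mul, eval_C, eval_X, inv_mul_eq_div,
    inv_mul_eq_div]

lemma natDegree_scaledChebyshev_le : (scaledChebyshev k b N).natDegree ≤ k := by
  refine (natDegree_C_mul_le _ _).trans (natDegree_comp_le.trans ?_)
  have h : (C b⁻¹ * X : ℝ[X]).natDegree ≤ 1 := (natDegree_C_mul_le _ _).trans natDegree_X_le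
  simpa [natDegree_T] using Nat.mul_le_mul_left k h

lemma abs_eval_scaledChebyshev_le (hb : 0 < b) (hbN : b ≤ N) {x : ℝ} (hx : |x| ≤ b) :
    |(scaledChebyshev k b N).eval x| ≤ ((T ℝ k).eval (N / b))⁻¹ := by
  have hT := one_le_eval_T_real k ((one_le_div hb).2 hbN)
  rw [eval_scaledChebyshev, abs_div, abs_of_pos (zero_lt_one.trans_le hT), div_eq_mul_inv]
  refine mul_le_of_le_one_left (by positivity) (abs_eval_T_real_le_one _ ?_)
  rwa [abs_div, abs_of_pos hb, div_le_one hb]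

lemma abs_eval_scaledChebyshev_le_exp {a : ℝ} (hb : 0 < b) (hbN : b ≤ N) (hNb : N ≤ 2 * b)
    (h₁ : 8 * a ≤ k ^ 2 * (N / b - 1)) (h₂ : (3 * a) ^ 2 ≤ k ^ 2 * (N / b - 1))
    {x : ℝ} (hx : |x| ≤ b) : |(scaledChebyshev k b N).eval x| ≤ exp (-a) := by
  have hT := exp_le_eval_T_real k ((one_le_div hb).2 hbN) ((div_le_iff₀ hb).2 (by linarith))
    (by exact_mod_cast h₁) (by exact_mod_cast h₂)
  rw [exp_neg]
  exact (abs_eval_scaledChebyshev_le hb hbN hx).trans (inv_anti₀ (exp_pos _) hT)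

lemma scaledChebyshev_mem_peakSubmonoid (hb : 0 < b) (hbN : b ≤ N) :
    scaledChebyshev k b N ∈ peakSubmonoid N := by
  have hT := one_le_eval_T_real k ((one_le_div hb).2 hbN)
  refine ⟨by rw [eval_scaledChebyshev, div_self (by linarith)], fun x hx => ?_⟩
  rcases le_or_gt x b with hxb | hbx
  · exact (abs_eval_scaledChebyshev_le hb hbN (abs_le.2 ⟨by linarith [hx.1], hxb⟩)).trans
      (inv_le_one_of_one_le₀ hT)
  · have hx₁ : 1 ≤ x / b := (one_le_div hb).2 hbx.le
    have hTx := one_le_eval_T_real k hx₁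
    rw [eval_scaledChebyshev, abs_of_nonneg (by positivity), div_le_one (by linarith)]
    exact monotoneOn_eval_T_real k hx₁ ((one_le_div hb).2 hbN)
      (div_le_div_of_nonneg_right hx.2 hb.le)

lemma eval_scaledChebyshev_mul_cos (hk : k ≠ 0) (hb : b ≠ 0) :
    (scaledChebyshev k b N).eval (b * cos (π / (2 * k))) = 0 := by
  have hθ : ((k : ℤ) : ℝ) * (π / (2 * k)) = π / 2 := by
    push_cast
    field_simp
  rw [eval_scaledChebyshev, mul_div_cancel_left₀ _ hb, T_real_cos, hθ, cos_pi_div_two,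
    zero_div]

end ScaledChebyshev

lemma exists_mem_peakSubmonoid_eval_eq_zero {N y : ℝ} (hy : 0 < y) (hyN : y < N) {k : ℕ}
    (hk : 4 * N ≤ k ^ 2 * (N - y)) :
    ∃ q ∈ peakSubmonoid N, q.natDegree ≤ k ∧ q.eval y = 0 := by
  set θ := π / (2 * k)
  have hk₀ : k ≠ 0 := by
    rintro rfl
    have : 4 * N ≤ 0 := hk.trans_eq (by simp)
    linarith
  have hθ : θ ^ 2 * k ^ 2 = π ^ 2 / 4 := by
    simp only [θ]
    field_simp
    ring
  -- `cos (π / 2k) ≥ 1 - π² / 8k²`, and `N π² / 8k² ≤ N - y`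
  have hyθ : y ≤ N * cos θ := by
    have hπ : π ^ 2 ≤ 16 := by nlinarith [pi_le_four, pi_pos]
    have : N * θ ^ 2 / 2 ≤ N - y := by nlinarith
    nlinarith [one_sub_sq_div_two_le_cos (x := θ)]
  have hcos : 0 < cos θ := by
    by_contra! h
    nlinarith
  refine ⟨scaledChebyshev k (y / cos θ) N,
    scaledChebyshev_mem_peakSubmonoid (by positivity) ((div_le_iff₀ hcos).2 (by linarith)),
    natDegree_scaledChebyshev_le, ?_⟩
  have h := eval_scaledChebyshev_mul_cos (N := N) hk₀ (div_pos hy hcos).ne'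
  rwa [div_mul_cancel₀ _ hcos.ne'] at h

lemma sum_inv_sqrt_le (m : ℕ) : ∑ j ∈ Finset.Icc 1 m, (√j)⁻¹ ≤ 2 * √m := by
  induction m with
  | zero => simp
  | succ m ih =>
    rw [Finset.sum_Icc_succ_top (by omega)]
    -- `1 / √(m + 1) ≤ 2 (√(m + 1) - √m)` is AM-GM for `√m √(m + 1)`
    have hm : √(m + 1 : ℕ) ^ 2 = √m ^ 2 + 1 := by
      rw [sq_sqrt (by positivity), sq_sqrt (by positivity)]
      push_cast
      ring
    have hpos : 0 < √(m + 1 : ℕ) := sqrt_pos.2 (by positivity)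
    have hstep : (√(m + 1 : ℕ))⁻¹ ≤ 2 * √(m + 1 : ℕ) - 2 * √m := by
      rw [inv_le_iff_one_le_mul₀' hpos]
      nlinarith [sq_nonneg (√(m + 1 : ℕ) - √m)]
    linarith

lemma sum_ceil_two_sqrt_div_le (n m : ℕ) :
    ∑ j ∈ Finset.Icc 1 m, (⌈2 * √(n / j)⌉₊ : ℝ) ≤ m + 4 * √(n * m) := by
  calc ∑ j ∈ Finset.Icc 1 m, (⌈2 * √(n / j)⌉₊ : ℝ)
      ≤ ∑ j ∈ Finset.Icc 1 m, (2 * √n * (√j)⁻¹ + 1) := by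
        refine Finset.sum_le_sum fun j _ => (Nat.ceil_lt_add_one (by positivity)).le.trans_eq ?_
        rw [sqrt_div (Nat.cast_nonneg _), div_eq_mul_inv, mul_assoc]
    _ = 2 * √n * ∑ j ∈ Finset.Icc 1 m, (√j)⁻¹ + m := by
        rw [Finset.sum_add_distrib, ← Finset.mul_sum]
        simp
    _ ≤ 2 * √n * (2 * √m) + m := by gcongr; exact sum_inv_sqrt_le m
    _ = m + 4 * √(n * m) := by rw [sqrt_mul (Nat.cast_nonneg _)]; ring

lemma exists_mem_peakSubmonoid_vanishing_top (n m : ℕ) (hmn : m < n) :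
    ∃ q ∈ peakSubmonoid n, (q.natDegree : ℝ) ≤ m + 4 * √(n * m) ∧
      ∀ t : ℕ, n - m ≤ t → t < n → q.eval (t : ℝ) = 0 := by
  have hfactor : ∀ j ∈ Finset.Icc 1 m, ∃ q ∈ peakSubmonoid n,
      q.natDegree ≤ ⌈2 * √(n / j)⌉₊ ∧ q.eval ((n - j : ℕ) : ℝ) = 0 := by
    intro j hj
    obtain ⟨hj₁, hjm⟩ := Finset.mem_Icc.1 hj
    have hj₀ : (0 : ℝ) < j := by exact_mod_cast hj₁
    refine exists_mem_peakSubmonoid_eval_eq_zero (by exact_mod_cast (by omega : 0 < n - j))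
      (by exact_mod_cast (by omega : n - j < n)) ?_
    rw [Nat.cast_sub (by omega), sub_sub_cancel]
    calc 4 * (n : ℝ) = (2 * √(n / j)) ^ 2 * j := by
          rw [mul_pow, sq_sqrt (by positivity)]
          field_simp
          ring
      _ ≤ _ := by gcongr; exact Nat.le_ceil _
  choose q hq hdeg hzero using hfactor
  refine ⟨∏ j ∈ (Finset.Icc 1 m).attach, q j j.2, prod_mem fun j _ => hq j j.2, ?_, ?_⟩
  · have h : (∏ j ∈ (Finset.Icc 1 m).attach, q j j.2).natDegree ≤
        ∑ j ∈ Finset.Icc 1 m, ⌈2 * √(n / j)⌉₊ := by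
      rw [← Finset.sum_attach]
      exact (natDegree_prod_le _ _).trans (Finset.sum_le_sum fun j _ => hdeg j.1 j.2)
    calc _ ≤ ∑ j ∈ Finset.Icc 1 m, (⌈2 * √(n / j)⌉₊ : ℝ) := by exact_mod_cast h
      _ ≤ _ := sum_ceil_two_sqrt_div_le n m
  · intro t ht htn
    have hj : n - t ∈ Finset.Icc 1 m := Finset.mem_Icc.2 ⟨by omega, by omega⟩
    rw [eval_prod]
    refine Finset.prod_eq_zero (Finset.mem_attach _ ⟨n - t, hj⟩) ?_
    simpa [Nat.sub_sub_self htn.le] using hzero (n - t) hj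

lemma exists_mem_peakSubmonoid_vanishing_range (n : ℕ) (hn : 1 ≤ n) :
    ∃ q ∈ peakSubmonoid n, (q.natDegree : ℝ) ≤ n + 4 * √(n * (n - 1)) ∧
      ∀ t : ℕ, t < n → q.eval (t : ℝ) = 0 := by
  obtain ⟨q, hq, hdeg, hzero⟩ := exists_mem_peakSubmonoid_vanishing_top n (n - 1) (by omega)
  have hn₀ : (0 : ℝ) < n := by exact_mod_cast hn
  have hX : C (n : ℝ)⁻¹ * X ∈ peakSubmonoid n := by
    refine ⟨by simp [hn₀.ne'], fun x hx => ?_⟩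
    rw [eval_mul, eval_C, eval_X, abs_of_nonneg (mul_nonneg (inv_nonneg.2 hn₀.le) hx.1),
      inv_mul_le_one₀ hn₀]
    exact hx.2
  refine ⟨C (n : ℝ)⁻¹ * X * q, mul_mem hX hq, ?_, fun t ht => ?_⟩
  · have h₁ : (C (n : ℝ)⁻¹ * X).natDegree ≤ 1 :=
      (natDegree_C_mul_le _ _).trans natDegree_X_le
    have h₂ : ((C (n : ℝ)⁻¹ * X * q).natDegree : ℝ) ≤ 1 + q.natDegree := by
      exact_mod_cast natDegree_mul_le.trans (Nat.add_le_add_right h₁ _)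
    rw [Nat.cast_sub hn, Nat.cast_one] at hdeg
    linarith
  · rcases Nat.eq_zero_or_pos t with rfl | ht₀
    · simp
    · rw [eval_mul, hzero t (by omega) ht, mul_zero]

lemma exists_mul_mem_peakSubmonoid_abs_eval_le_exp {n ℓ r : ℕ} {a : ℝ} {q : ℝ[X]}
    (hq : q ∈ peakSubmonoid n) (hzero : ∀ t : ℕ, n - ℓ < t → t < n → q.eval (t : ℝ) = 0)
    (hℓ : 0 < ℓ) (hℓn : 2 * ℓ ≤ n) (h₁ : 8 * a * n ≤ r ^ 2 * ℓ)
    (h₂ : (3 * a) ^ 2 * n ≤ r ^ 2 * ℓ) :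
    ∃ p ∈ peakSubmonoid n, p.natDegree ≤ r + q.natDegree ∧
      ∀ t : ℕ, t < n → |p.eval (t : ℝ)| ≤ exp (-a) := by
  have hℓn' : 2 * (ℓ : ℝ) ≤ n := by exact_mod_cast hℓn
  have hℓ' : (0 : ℝ) < ℓ := by exact_mod_cast hℓ
  have hn : (0 : ℝ) < n := by linarith
  set b : ℝ := n - ℓ with hb_def
  have hb : 0 < b := by linarith
  have hε : r ^ 2 * ℓ / n ≤ r ^ 2 * (n / b - 1) := by
    rw [div_sub_one hb.ne', show (n : ℝ) - b = ℓ by ring, mul_div_assoc]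
    gcongr
    linarith
  refine ⟨scaledChebyshev r b n * q,
    mul_mem (scaledChebyshev_mem_peakSubmonoid hb (by linarith)) hq,
    natDegree_mul_le.trans (Nat.add_le_add_right natDegree_scaledChebyshev_le _),
    fun t ht => ?_⟩
  rw [eval_mul, abs_mul]
  rcases le_or_gt t (n - ℓ) with hlow | htop
  · have htb : (t : ℝ) ≤ b := by
      rw [hb_def, ← Nat.cast_sub (by omega)]
      exact_mod_cast hlow
    calc _ ≤ exp (-a) * 1 := by
          refine mul_le_mul (abs_eval_scaledChebyshev_le_exp hb (by linarith) (by linarith)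
            (((le_div_iff₀ hn).2 h₁).trans hε) (((le_div_iff₀ hn).2 h₂).trans hε) ?_)
            (hq.2 t ⟨by positivity, by exact_mod_cast ht.le⟩) (abs_nonneg _) (exp_pos _).le
          rwa [abs_of_nonneg (Nat.cast_nonneg _)]
      _ = exp (-a) := mul_one _
  · rw [hzero t htop ht, abs_zero, mul_zero]
    positivity

lemma exists_mem_peakSubmonoid_small_on_range (n d : ℕ) (hn : 2 ≤ n) (hd : d < 5 * n) :
    ∃ p ∈ peakSubmonoid n, p.natDegree ≤ d ∧
      ∀ t : ℕ, t < n → |p.eval (t : ℝ)| ≤ exp (-(1 / 64) * d ^ 2 / n) := by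
  have hn₀ : (0 : ℝ) < n := by positivity
  have hd' : (d : ℝ) < 5 * n := by exact_mod_cast hd
  set m := d ^ 2 / (100 * n)
  have hm_le : (m : ℝ) * (100 * n) ≤ d ^ 2 := by exact_mod_cast Nat.div_mul_le_self _ _
  have hm_gt : (d : ℝ) ^ 2 < (m + 1) * (100 * n) := by
    exact_mod_cast (Nat.lt_div_mul_add (a := d ^ 2) (b := 100 * n) (by positivity)).trans_eq
      (by ring)
  have hmn : 4 * m < n := by
    have : (4 * m : ℝ) < n := by nlinarith
    exact_mod_cast this
  obtain ⟨q, hq, hqdeg, hqzero⟩ := exists_mem_peakSubmonoid_vanishing_top n m (by omega)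
  have hS : 2 * q.natDegree ≤ d := by
    have hsqrt : √(n * m) ≤ d / 10 := by
      rw [sqrt_le_left (by positivity)]
      nlinarith
    have : (2 * q.natDegree : ℝ) ≤ d := by nlinarith
    exact_mod_cast this
  set r := d - q.natDegree
  have hr : (d : ℝ) ^ 2 / 4 ≤ r ^ 2 := by
    have : (d : ℝ) ≤ 2 * r := by exact_mod_cast (by omega : d ≤ 2 * r)
    nlinarith
  have h₁ : 8 * (d ^ 2 / (64 * n)) * n ≤ (r : ℝ) ^ 2 * ((m + 1 : ℕ) : ℝ) := by
    calc 8 * ((d : ℝ) ^ 2 / (64 * n)) * n = d ^ 2 / 4 * (1 / 2) := by field_simp; ring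
      _ ≤ (r : ℝ) ^ 2 * ((m + 1 : ℕ) : ℝ) := by gcongr; push_cast; linarith
  have h₂ : (3 * (d ^ 2 / (64 * n))) ^ 2 * n ≤ (r : ℝ) ^ 2 * ((m + 1 : ℕ) : ℝ) := by
    calc (3 * ((d : ℝ) ^ 2 / (64 * n))) ^ 2 * n = d ^ 2 * (9 * d ^ 2) / (4096 * n) := by
          field_simp; ring
      _ ≤ (d : ℝ) ^ 2 * (1024 * (m + 1) * n) / (4096 * n) := by
          gcongr _ * ?_ / _
          nlinarith
      _ = (d : ℝ) ^ 2 / 4 * ((m + 1 : ℕ) : ℝ) := by push_cast; field_simp; ring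
      _ ≤ (r : ℝ) ^ 2 * ((m + 1 : ℕ) : ℝ) := by gcongr
  obtain ⟨p, hp, hpdeg, hpsmall⟩ := exists_mul_mem_peakSubmonoid_abs_eval_le_exp hq
    (fun t ht htn => hqzero t (by omega) htn) (by omega) (by omega) h₁ h₂
  exact ⟨p, hp, hpdeg.trans (by omega), fun t ht => (hpsmall t ht).trans_eq (by ring_nf)⟩

/-- There is a constant `c > 0` such that for all `n ≥ 1` and `d ≥ 0`, there is a univariate
polynomial `p` of degree at most `d` with `p(n) = 1`, `|p(t)| ≤ exp(−c·d²/n)` for each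
integer `t ∈ {0,…,n−1}`, and `|p(t)| ≤ 1` for all real `t ∈ [0,n]`. -/
theorem exists_and_approx_polynomial :
    ∃ c : ℝ, 0 < c ∧ ∀ n : ℕ, 1 ≤ n → ∀ d : ℕ,
      ∃ p : Polynomial ℝ, p.natDegree ≤ d ∧
        p.eval (n : ℝ) = 1 ∧
        (∀ t : ℕ, t < n → |p.eval (t : ℝ)| ≤ Real.exp (-c * d ^ 2 / n)) ∧
        (∀ t ∈ Set.Icc (0 : ℝ) n, |p.eval t| ≤ 1) := by
  refine ⟨1 / 64, by norm_num, fun n hn d => ?_⟩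
  rcases Nat.eq_zero_or_pos d with rfl | hd
  · exact ⟨1, by simp, by simp, fun _ _ => by simp, fun _ _ => by simp⟩
  rcases le_or_gt ((n : ℝ) + 4 * √(n * (n - 1))) d with hbig | hsmall
  · obtain ⟨p, ⟨hpn, hp⟩, hdeg, hzero⟩ := exists_mem_peakSubmonoid_vanishing_range n hn
    refine ⟨p, by exact_mod_cast hdeg.trans hbig, hpn, fun t ht => ?_, hp⟩
    rw [hzero t ht, abs_zero]
    positivity
  · have hsqrt : √(n * (n - 1)) ≤ n := by
      rw [sqrt_le_left (Nat.cast_nonneg _)]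
      nlinarith
    have hn₂ : 2 ≤ n := by
      by_contra! h
      obtain rfl : n = 1 := by omega
      norm_num at hsmall
      omega
    obtain ⟨p, ⟨hpn, hp⟩, hdeg, hpt⟩ := exists_mem_peakSubmonoid_small_on_range n d hn₂
      (by exact_mod_cast (by linarith : (d : ℝ) < 5 * n))
    exact ⟨p, hdeg, hpn, hpt, hp⟩
end

section
/- Let f : X × {0,1}^{N+n}_n → ℝ be defined from g : X × {0,1}^N_{≤n} → ℝ by f(x, y₁…y_{N+n}) = g(x, y₁…y_N), where {0,1}^{N+n}_n is the set of Boolean strings of Hamming weight exactly n and {0,1}^N_{≤n} those of weight at most n. Then for every ε ≥ 0, the least degree of a polynomial approximating f pointwise within ε on its domain equals the least degree of a polynomial approximating g pointwise within ε on its domain. -/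
open MvPolynomial Finset

namespace HomogAux

/-- `α ⊕ Option β ≃ Option (α ⊕ β)`. -/
def sumOptionEquiv (α β : Type*) : α ⊕ Option β ≃ Option (α ⊕ β) where
  toFun s := match s with
    | .inl a => some (.inl a)
    | .inr none => none
    | .inr (some b) => some (.inr b)
  invFun o := match o with
    | none => .inr none
    | some (.inl a) => .inl a
    | some (.inr b) => .inr (some b)
  left_inv := by rintro (a | (_ | b)) <;> rfl
  right_inv := by rintro (_ | (a | b)) <;> rfl

lemma exists_nat_sum {σ : Type*} [Fintype σ] (y : σ → ℝ)
    (hy : ∀ j, y j = 0 ∨ y j = 1) : ∃ w : ℕ, ∑ j, y j = w := by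
  classical
  refine ⟨∑ j, if y j = 1 then 1 else 0, ?_⟩
  push_cast
  refine Finset.sum_congr rfl fun j _ => ?_
  rcases hy j with h | h <;> simp [h]

/-- One step of the de-homogenization: remove one padding variable, widening
the lower weight bound from `a+1` to `a`. -/
lemma step {μ σ : Type*} [Fintype μ] [Fintype σ] [DecidableEq σ]
    (F : (μ → ℝ) → (σ → ℝ) → ℝ) (ε : ℝ) (hε : 0 ≤ ε) (D a b : ℕ) (hab : a < b)
    (p' : MvPolynomial (μ ⊕ Option σ) ℝ) (hd : p'.totalDegree ≤ D)
    (h : ∀ (x : μ → ℝ) (Y : Option σ → ℝ), (∀ i, x i = 0 ∨ x i = 1) →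
      (∀ o, Y o = 0 ∨ Y o = 1) →
      ((a : ℝ) + 1) ≤ ∑ o, Y o → (∑ o, Y o) ≤ b →
      |F x (fun j => Y (some j)) - eval (Sum.elim x Y) p'| ≤ ε) :
    ∃ p : MvPolynomial (μ ⊕ σ) ℝ, p.totalDegree ≤ D ∧
      ∀ (x : μ → ℝ) (y : σ → ℝ), (∀ i, x i = 0 ∨ x i = 1) →
        (∀ j, y j = 0 ∨ y j = 1) →
        (a : ℝ) ≤ ∑ j, y j → (∑ j, y j) ≤ b →
        |F x y - eval (Sum.elim x y) p| ≤ ε := by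
  classical
  set v : μ ⊕ Option σ := Sum.inr none with hv
  set f : μ ⊕ σ → μ ⊕ Option σ := Sum.map id some with hfdef
  have hf : Function.Injective f := by
    rintro (i | j) (i' | j') hij <;> simp [hfdef] at hij <;> simp [hij]
  set φ : ((μ ⊕ Option σ) →₀ ℕ) → ((μ ⊕ σ) →₀ ℕ) :=
    fun m => Finsupp.comapDomain f m hf.injOn with hφdef
  have hφl : ∀ (m : (μ ⊕ Option σ) →₀ ℕ) (i : μ), φ m (Sum.inl i) = m (Sum.inl i) :=
    fun m i => rfl
  have hφr : ∀ (m : (μ ⊕ Option σ) →₀ ℕ) (j : σ),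
      φ m (Sum.inr j) = m (Sum.inr (some j)) := fun m j => rfl
  have hsum : ∀ m : (μ ⊕ Option σ) →₀ ℕ,
      (m.sum fun _ e => e) = m v + ((φ m).sum fun _ e => e) := by
    intro m
    rw [Finsupp.sum_fintype _ _ (fun _ => rfl), Finsupp.sum_fintype _ _ (fun _ => rfl),
      Fintype.sum_sum_type, Fintype.sum_sum_type, Fintype.sum_option]
    simp only [hφl, hφr, hv]
    ring
  set S0 := p'.support.filter (fun m => m v = 0) with hS0
  set S1 := p'.support.filter (fun m => ¬ m v = 0) with hS1
  set A : MvPolynomial (μ ⊕ σ) ℝ := ∑ m ∈ S0, monomial (φ m) (coeff m p') with hA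
  set B : MvPolynomial (μ ⊕ σ) ℝ := ∑ m ∈ S1, monomial (φ m) (coeff m p') with hB
  set W : MvPolynomial (μ ⊕ σ) ℝ := ∑ j : σ, X (Sum.inr j) with hW
  set Cpol : MvPolynomial (μ ⊕ σ) ℝ :=
    MvPolynomial.C (((b : ℝ) - a)⁻¹) * (MvPolynomial.C (b : ℝ) - W) with hC
  have hWdeg : W.totalDegree ≤ 1 := by
    refine (totalDegree_finset_sum _ _).trans (Finset.sup_le fun j _ => ?_)
    simp [totalDegree_X]
  have hCdeg : Cpol.totalDegree ≤ 1 := by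
    refine (totalDegree_mul _ _).trans ?_
    have h2 : (MvPolynomial.C (b : ℝ) - W).totalDegree ≤ 1 := by
      rw [sub_eq_add_neg]
      refine (totalDegree_add _ _).trans ?_
      simp only [sup_le_iff]
      constructor
      · have := MvPolynomial.totalDegree_C (σ := μ ⊕ σ) ((b : ℝ))
        omega
      · rw [totalDegree_neg]; exact hWdeg
    have h1 := MvPolynomial.totalDegree_C (σ := μ ⊕ σ) (((b : ℝ) - a)⁻¹)
    omega
  -- degree bound
  have hdeg : (A + Cpol * B).totalDegree ≤ D := by
    refine (totalDegree_add _ _).trans (sup_le ?_ ?_)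
    · refine (totalDegree_finset_sum _ _).trans (Finset.sup_le fun m hm => ?_)
      rw [hS0, Finset.mem_filter] at hm
      have h1 : (m.sum fun _ e => e) ≤ D := (le_totalDegree hm.1).trans hd
      have h2 := hsum m
      refine le_trans ?_ h1
      rcases eq_or_ne (coeff m p') 0 with h0 | h0
      · simp [h0]
      · rw [totalDegree_monomial _ h0]; omega
    · rw [Finset.mul_sum]
      refine (totalDegree_finset_sum _ _).trans (Finset.sup_le fun m hm => ?_)
      rw [hS1, Finset.mem_filter] at hm
      have h1 : (m.sum fun _ e => e) ≤ D := (le_totalDegree hm.1).trans hd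
      have h2 := hsum m
      have hmv : 1 ≤ m v := Nat.one_le_iff_ne_zero.mpr hm.2
      refine (totalDegree_mul _ _).trans ?_
      rcases eq_or_ne (coeff m p') 0 with h0 | h0
      · simp [h0, totalDegree_zero]
        omega
      · rw [totalDegree_monomial _ h0]
        omega
  refine ⟨A + Cpol * B, hdeg, ?_⟩
  -- evaluation decomposition
  have evalAB : ∀ (x : μ → ℝ) (y : σ → ℝ) (z : ℝ), (z = 0 ∨ z = 1) →
      eval (Sum.elim x (fun o => o.elim z y)) p'
        = eval (Sum.elim x y) A + z * eval (Sum.elim x y) B := by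
    intro x y z hz
    have hprod : ∀ m : (μ ⊕ Option σ) →₀ ℕ,
        (∏ w, (Sum.elim x (fun o => o.elim z y)) w ^ m w)
          = z ^ m v * ∏ w, (Sum.elim x y) w ^ (φ m) w := by
      intro m
      rw [Fintype.prod_sum_type, Fintype.prod_sum_type, Fintype.prod_option]
      simp only [Sum.elim_inl, Sum.elim_inr, Option.elim, hφl, hφr, hv]
      ring
    have eA : eval (Sum.elim x y) A
        = ∑ m ∈ S0, coeff m p' * ∏ w, (Sum.elim x y) w ^ (φ m) w := by
      rw [hA, map_sum]
      refine Finset.sum_congr rfl fun m _ => ?_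
      rw [eval_monomial, Finsupp.prod_fintype]
      exact fun w => pow_zero _
    have eB : eval (Sum.elim x y) B
        = ∑ m ∈ S1, coeff m p' * ∏ w, (Sum.elim x y) w ^ (φ m) w := by
      rw [hB, map_sum]
      refine Finset.sum_congr rfl fun m _ => ?_
      rw [eval_monomial, Finsupp.prod_fintype]
      exact fun w => pow_zero _
    rw [eval_eq']
    calc ∑ m ∈ p'.support, coeff m p' * ∏ w, (Sum.elim x (fun o => o.elim z y)) w ^ m w
        = ∑ m ∈ p'.support, coeff m p' * (z ^ m v * ∏ w, (Sum.elim x y) w ^ (φ m) w) := by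
          exact Finset.sum_congr rfl fun m _ => by rw [hprod m]
      _ = (∑ m ∈ S0, coeff m p' * (z ^ m v * ∏ w, (Sum.elim x y) w ^ (φ m) w))
          + ∑ m ∈ S1, coeff m p' * (z ^ m v * ∏ w, (Sum.elim x y) w ^ (φ m) w) := by
          rw [hS0, hS1, Finset.sum_filter_add_sum_filter_not]
      _ = eval (Sum.elim x y) A + z * eval (Sum.elim x y) B := by
          rw [eA, eB, Finset.mul_sum]
          congr 1
          · refine Finset.sum_congr rfl fun m hm => ?_
            rw [hS0, Finset.mem_filter] at hm
            rw [hm.2, pow_zero, one_mul]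
          · refine Finset.sum_congr rfl fun m hm => ?_
            rw [hS1, Finset.mem_filter] at hm
            have : z ^ m v = z := by
              rcases hz with h | h
              · rw [h, zero_pow hm.2]
              · rw [h, one_pow]
            rw [this]; ring
  intro x y hx hy hlow hup
  obtain ⟨w, hwsum⟩ := exists_nat_sum y hy
  have hba : (0 : ℝ) < (b : ℝ) - a := by
    have : (a : ℝ) < b := by exact_mod_cast hab
    linarith
  have hwa : a ≤ w := by
    rw [hwsum] at hlow; exact_mod_cast hlow
  have hwb : w ≤ b := by
    rw [hwsum] at hup; exact_mod_cast hup
  set c : ℝ := ((b : ℝ) - a)⁻¹ * ((b : ℝ) - w) with hc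
  have hc0 : 0 ≤ c := by
    apply mul_nonneg (le_of_lt (inv_pos.mpr hba))
    have : (w : ℝ) ≤ b := by exact_mod_cast hwb
    linarith
  have hc1 : c ≤ 1 := by
    rw [hc, inv_mul_le_iff₀ hba]
    have : (a : ℝ) ≤ w := by exact_mod_cast hwa
    linarith
  set P0 : ℝ := eval (Sum.elim x (fun o => o.elim 0 y)) p' with hP0def
  set P1 : ℝ := eval (Sum.elim x (fun o => o.elim 1 y)) p' with hP1def
  have hP0 : P0 = eval (Sum.elim x y) A := by
    rw [hP0def, evalAB x y 0 (Or.inl rfl)]; ring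
  have hP1 : P1 = eval (Sum.elim x y) A + eval (Sum.elim x y) B := by
    rw [hP1def, evalAB x y 1 (Or.inr rfl)]; ring
  have hevalp : eval (Sum.elim x y) (A + Cpol * B) = (1 - c) * P0 + c * P1 := by
    have hCval : eval (Sum.elim x y) Cpol = c := by
      rw [hC]
      simp only [map_mul, map_sub, eval_C, hW, map_sum, eval_X, Sum.elim_inr]
      rw [hwsum, hc]
    rw [map_add, map_mul, hCval, hP0, hP1]
    ring
  have hBool0 : ∀ o : Option σ, (fun o => o.elim (0:ℝ) y) o = 0 ∨ (fun o => o.elim (0:ℝ) y) o = 1 := by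
    rintro (_ | j)
    · exact Or.inl rfl
    · exact hy j
  have hBool1 : ∀ o : Option σ, (fun o => o.elim (1:ℝ) y) o = 0 ∨ (fun o => o.elim (1:ℝ) y) o = 1 := by
    rintro (_ | j)
    · exact Or.inr rfl
    · exact hy j
  have hsum0 : ∑ o : Option σ, (fun o => o.elim (0:ℝ) y) o = w := by
    rw [Fintype.sum_option]
    simpa using hwsum
  have hsum1 : ∑ o : Option σ, (fun o => o.elim (1:ℝ) y) o = 1 + w := by
    rw [Fintype.sum_option]
    simp [hwsum]
  have hB0 : a + 1 ≤ w → |F x y - P0| ≤ ε := by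
    intro hw
    have := h x (fun o => o.elim 0 y) hx hBool0
      (by rw [hsum0]; exact_mod_cast hw) (by rw [hsum0]; exact_mod_cast hwb)
    simpa using this
  have hB1 : w + 1 ≤ b → |F x y - P1| ≤ ε := by
    intro hw
    have := h x (fun o => o.elim 1 y) hx hBool1
      (by rw [hsum1]
          push_cast
          have : (a:ℝ) ≤ w := by exact_mod_cast hwa
          linarith)
      (by rw [hsum1]; push_cast
          have : (w : ℝ) + 1 ≤ b := by exact_mod_cast hw
          linarith)
    simpa using this
  rw [hevalp]
  rcases eq_or_lt_of_le hwb with hwb' | hwb'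
  · -- w = b : c = 0, use P0
    have hcz : c = 0 := by
      rw [hc, hwb']; ring
    rw [hcz]
    simpa using hB0 (by omega)
  · -- w < b
    have hP1b := hB1 (by omega)
    rcases eq_or_lt_of_le hwa with hwa' | hwa'
    · -- w = a : c = 1, use P1
      have hcz : c = 1 := by
        rw [hc, ← hwa']
        field_simp
      rw [hcz]
      simpa using hP1b
    · -- a < w : both valid
      have hP0b := hB0 (by omega)
      have key : F x y - ((1 - c) * P0 + c * P1)
          = (1 - c) * (F x y - P0) + c * (F x y - P1) := by ring
      rw [key]
      calc |(1 - c) * (F x y - P0) + c * (F x y - P1)|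
          ≤ |(1 - c) * (F x y - P0)| + |c * (F x y - P1)| := abs_add_le _ _
        _ = (1 - c) * |F x y - P0| + c * |F x y - P1| := by
            rw [abs_mul, abs_mul, abs_of_nonneg (by linarith : (0:ℝ) ≤ 1 - c),
              abs_of_nonneg hc0]
        _ ≤ (1 - c) * ε + c * ε := by
            have h1 := mul_le_mul_of_nonneg_left hP0b (by linarith : (0:ℝ) ≤ 1 - c)
            have h2 := mul_le_mul_of_nonneg_left hP1b hc0
            linarith
        _ = ε := by ring

end HomogAux

/-- Homogenization lemma: let `g` be defined on pairs `(x,y)` with `x ∈ {0,1}^M` and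
`y ∈ {0,1}^N` of Hamming weight at most `n`, and let `f(x, y₁…y_{N+n}) = g(x, y₁…y_N)` be
defined for `y ∈ {0,1}^{N+n}` of Hamming weight exactly `n`.  Then for every `ε ≥ 0` and
every degree bound `D`, `f` admits an `ε`-approximating polynomial of total degree at most
`D` on its domain if and only if `g` does; hence `deg_ε(f) = deg_ε(g)`. -/
theorem homogenization_lemma (M N n : ℕ)
    (g : (Fin M → ℝ) → (Fin N → ℝ) → ℝ) (ε : ℝ) (hε : 0 ≤ ε) (D : ℕ) :
    (∃ p : MvPolynomial (Fin M ⊕ Fin (N + n)) ℝ, p.totalDegree ≤ D ∧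
        ∀ (x : Fin M → ℝ) (y : Fin (N + n) → ℝ),
          (∀ i, x i = 0 ∨ x i = 1) → (∀ j, y j = 0 ∨ y j = 1) → (∑ j, y j) = n →
          |g x (fun j => y (Fin.castAdd n j)) - MvPolynomial.eval (Sum.elim x y) p| ≤ ε) ↔
    (∃ q : MvPolynomial (Fin M ⊕ Fin N) ℝ, q.totalDegree ≤ D ∧
        ∀ (x : Fin M → ℝ) (y : Fin N → ℝ),
          (∀ i, x i = 0 ∨ x i = 1) → (∀ j, y j = 0 ∨ y j = 1) → (∑ j, y j) ≤ n →
          |g x y - MvPolynomial.eval (Sum.elim x y) q| ≤ ε) := by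
  classical
  constructor
  · -- hard direction
    rintro ⟨p, hpd, hp⟩
    -- Q k : approximation over Fin M ⊕ (Fin N ⊕ Fin k) on weights in [k, n]
    set Q : ℕ → Prop := fun k =>
      ∃ p : MvPolynomial (Fin M ⊕ (Fin N ⊕ Fin k)) ℝ, p.totalDegree ≤ D ∧
        ∀ (x : Fin M → ℝ) (y : Fin N ⊕ Fin k → ℝ),
          (∀ i, x i = 0 ∨ x i = 1) → (∀ j, y j = 0 ∨ y j = 1) →
          (k : ℝ) ≤ ∑ j, y j → (∑ j, y j) ≤ n →
          |g x (fun i => y (Sum.inl i)) - MvPolynomial.eval (Sum.elim x y) p| ≤ ε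
      with hQ
    have hQn : Q n := by
      refine ⟨MvPolynomial.rename (Sum.map id finSumFinEquiv.symm) p, ?_, ?_⟩
      · exact (MvPolynomial.totalDegree_rename_le _ _).trans hpd
      · intro x y hx hy hlow hup
        have he : (Sum.elim x y) ∘ (Sum.map id finSumFinEquiv.symm)
            = Sum.elim x (fun j => y (finSumFinEquiv.symm j)) := by
          funext w; cases w <;> rfl
        rw [MvPolynomial.eval_rename, he]
        have hsum : ∑ j : Fin (N + n), y (finSumFinEquiv.symm j) = ∑ s, y s :=
          Equiv.sum_comp finSumFinEquiv.symm y
        have hres : (fun j => y (finSumFinEquiv.symm (Fin.castAdd n j)))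
            = fun i => y (Sum.inl i) := by
          funext j; rw [finSumFinEquiv_symm_apply_castAdd]
        have := hp x (fun j => y (finSumFinEquiv.symm j)) hx
          (fun j => hy _) (by rw [hsum]; linarith)
        rw [hres] at this
        exact this
    have hstep : ∀ k, k + 1 ≤ n → Q (k + 1) → Q k := by
      intro k hk hQk
      obtain ⟨p₁, hp₁d, hp₁⟩ := hQk
      set E : (Fin N ⊕ Fin (k + 1)) ≃ Option (Fin N ⊕ Fin k) :=
        (Equiv.sumCongr (Equiv.refl (Fin N)) (finSuccEquiv k)).trans
          (HomogAux.sumOptionEquiv (Fin N) (Fin k)) with hE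
      set p' : MvPolynomial (Fin M ⊕ Option (Fin N ⊕ Fin k)) ℝ :=
        MvPolynomial.rename (Sum.map id E) p₁ with hp'
      have hstep' := HomogAux.step (μ := Fin M) (σ := Fin N ⊕ Fin k)
        (fun x y => g x (fun i => y (Sum.inl i))) ε hε D k n hk p'
        ((MvPolynomial.totalDegree_rename_le _ _).trans hp₁d) ?_
      · obtain ⟨p₂, hp₂d, hp₂⟩ := hstep'
        exact ⟨p₂, hp₂d, fun x y hx hy hl hu => hp₂ x y hx hy hl hu⟩
      · intro x Y hx hY hlow hup
        have he : (Sum.elim x Y) ∘ (Sum.map id E) = Sum.elim x (fun s => Y (E s)) := by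
          funext w; cases w <;> rfl
        rw [hp', MvPolynomial.eval_rename, he]
        have hsum : ∑ s : Fin N ⊕ Fin (k + 1), Y (E s) = ∑ o, Y o :=
          Equiv.sum_comp E Y
        have hres : (fun i => Y (E (Sum.inl i))) = fun i : Fin N => Y (some (Sum.inl i)) := by
          funext i; rfl
        have := hp₁ x (fun s => Y (E s)) hx (fun s => hY _)
          (by rw [hsum]; push_cast at hlow ⊢; linarith) (by rw [hsum]; exact hup)
        rw [hres] at this
        exact this
    have hchain : ∀ k, k ≤ n → Q k → Q 0 := by
      intro k
      induction k with
      | zero => exact fun _ h => h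
      | succ k ih => exact fun hk h => ih (by omega) (hstep k hk h)
    obtain ⟨p₀, hp₀d, hp₀⟩ := hchain n le_rfl hQn
    refine ⟨MvPolynomial.rename (Sum.map id (Sum.elim id Fin.elim0)) p₀, ?_, ?_⟩
    · exact (MvPolynomial.totalDegree_rename_le _ _).trans hp₀d
    · intro x y hx hy hup
      have he : (Sum.elim x y) ∘ (Sum.map id (Sum.elim id Fin.elim0))
          = Sum.elim x (fun s : Fin N ⊕ Fin 0 => y (Sum.elim id Fin.elim0 s)) := by
        funext w; cases w <;> rfl
      rw [MvPolynomial.eval_rename, he]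
      have hsum : ∑ s : Fin N ⊕ Fin 0, y (Sum.elim id Fin.elim0 s) = ∑ j, y j := by
        rw [Fintype.sum_sum_type]
        simp
      have hy0 : ∀ j, (0:ℝ) ≤ y j := fun j => by rcases hy j with h | h <;> rw [h] <;> norm_num
      have := hp₀ x (fun s => y (Sum.elim id Fin.elim0 s)) hx
        (by rintro (j | j)
            · exact hy j
            · exact Fin.elim0 j)
        (by rw [hsum]; push_cast; exact Finset.sum_nonneg fun j _ => hy0 j)
        (by rw [hsum]; exact hup)
      exact this
  · -- easy direction
    rintro ⟨q, hqd, hq⟩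
    refine ⟨MvPolynomial.rename (Sum.map id (Fin.castAdd n)) q, ?_, ?_⟩
    · exact (MvPolynomial.totalDegree_rename_le _ _).trans hqd
    · intro x y hx hy hsum
      have he : (Sum.elim x y) ∘ (Sum.map id (Fin.castAdd n))
          = Sum.elim x (fun j => y (Fin.castAdd n j)) := by
        funext w; cases w <;> rfl
      rw [MvPolynomial.eval_rename, he]
      have hy0 : ∀ j, (0:ℝ) ≤ y j := fun j => by rcases hy j with h | h <;> rw [h] <;> norm_num
      have hsplit := Fin.sum_univ_add (f := y) (a := N) (b := n)
      have hle : ∑ j : Fin N, y (Fin.castAdd n j) ≤ n := by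
        have h2 : (0:ℝ) ≤ ∑ j : Fin n, y (Fin.natAdd N j) :=
          Finset.sum_nonneg fun j _ => hy0 _
        rw [hsum] at hsplit
        linarith
      exact hq x (fun j => y (Fin.castAdd n j)) hx (fun j => hy _) hle
end

section
/- Let p : {0,1}^n → ℝ be (the restriction of) a real polynomial of total degree d. Then there is a univariate real polynomial p* of degree at most d such that for all x ∈ {0,1}^n, the average of p(σx) over all permutations σ of the n coordinates equals p*(|x|), where |x| is the Hamming weight of x. -/
open Finset

private lemma mp_pow_self {y : ℝ} (h : y = 0 ∨ y = 1) {k : ℕ} (hk : k ≠ 0) : y ^ k = y := by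
  rcases h with h | h <;> subst h <;> simp [zero_pow hk]

/-- The symmetrized sum over permutations depends only on the cardinality of `S`. -/
private lemma mp_sum_perm_card_eq {n : ℕ} (x : Fin n → ℝ) {S S' : Finset (Fin n)}
    (hcard : S'.card = S.card) :
    (∑ σ : Equiv.Perm (Fin n), ∏ i ∈ S, x (σ i)) =
      ∑ σ : Equiv.Perm (Fin n), ∏ i ∈ S', x (σ i) := by
  classical
  -- build a permutation mapping S' onto S
  have h1 : S'.card = S.card := hcard
  have h2 : (S'ᶜ : Finset (Fin n)).card = (Sᶜ : Finset (Fin n)).card := by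
    simp [Finset.card_compl, h1]
  let e : {i // i ∈ S'} ≃ {i // i ∈ S} := S'.equivOfCardEq h1
  let e2 : (S'ᶜ : Finset (Fin n)) ≃ (Sᶜ : Finset (Fin n)) := Finset.equivOfCardEq h2
  let f : {i // ¬ i ∈ S'} ≃ {i // ¬ i ∈ S} :=
    ((Equiv.subtypeEquivRight (fun i => (Finset.mem_compl (s := S')).symm)).trans e2).trans
      (Equiv.subtypeEquivRight (fun i => Finset.mem_compl (s := S)))
  let τ : Equiv.Perm (Fin n) := Equiv.subtypeCongr e f
  have hτ : ∀ i (h : i ∈ S'), τ i = (e ⟨i, h⟩ : Fin n) := by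
    intro i h
    simp [τ, Equiv.subtypeCongr, h]
  have hmap : S'.map τ.toEmbedding = S := by
    apply Finset.eq_of_subset_of_card_le
    · intro j hj
      rcases Finset.mem_map.mp hj with ⟨i, hi, rfl⟩
      simpa [hτ i hi] using (e ⟨i, hi⟩).2
    · simp [h1]
  have hprod : ∀ σ : Equiv.Perm (Fin n),
      (∏ i ∈ S, x (σ i)) = ∏ i ∈ S', x (σ (τ i)) := by
    intro σ
    rw [← hmap, Finset.prod_map]
    rfl
  calc (∑ σ : Equiv.Perm (Fin n), ∏ i ∈ S, x (σ i))
      = ∑ σ : Equiv.Perm (Fin n), ∏ i ∈ S', x (σ (τ i)) := by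
        exact Fintype.sum_congr _ _ hprod
    _ = ∑ σ : Equiv.Perm (Fin n), ∏ i ∈ S', x (σ i) := by
        refine Fintype.sum_equiv (Equiv.mulRight τ)
          (fun σ => ∏ i ∈ S', x (σ (τ i))) (fun σ => ∏ i ∈ S', x (σ i)) ?_
        intro σ; rfl

/-- Key counting identity. -/
private lemma mp_key {n : ℕ} (x : Fin n → ℝ) (hx : ∀ i, x i = 0 ∨ x i = 1)
    (S : Finset (Fin n)) :
    (n.choose S.card : ℝ) * ∑ σ : Equiv.Perm (Fin n), ∏ i ∈ S, x (σ i) =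
      (n.factorial : ℝ) *
        (((univ.filter fun i => x i = 1).card).choose S.card : ℝ) := by
  classical
  set T : Finset (Fin n) := univ.filter fun i => x i = 1 with hT
  set s := S.card with hs
  have hsum : ∑ S' ∈ Finset.powersetCard s (univ : Finset (Fin n)),
      (∑ σ : Equiv.Perm (Fin n), ∏ i ∈ S', x (σ i)) =
      (n.choose s : ℝ) * ∑ σ : Equiv.Perm (Fin n), ∏ i ∈ S, x (σ i) := by
    rw [Finset.sum_congr rfl (fun S' hS' => ?_), Finset.sum_const, nsmul_eq_mul,
      Finset.card_powersetCard, Finset.card_univ, Fintype.card_fin]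
    exact (mp_sum_perm_card_eq x (by
      have := (Finset.mem_powersetCard.mp hS').2; omega)).symm
  rw [← hsum, Finset.sum_comm]
  have hinner : ∀ σ : Equiv.Perm (Fin n),
      ∑ S' ∈ Finset.powersetCard s (univ : Finset (Fin n)), ∏ i ∈ S', x (σ i) =
      (T.card.choose s : ℝ) := by
    intro σ
    have hre : ∑ S' ∈ Finset.powersetCard s (univ : Finset (Fin n)), ∏ i ∈ S', x (σ i) =
        ∑ S' ∈ Finset.powersetCard s (univ : Finset (Fin n)), ∏ j ∈ S', x j := by
      refine Finset.sum_nbij' (fun S' => S'.map σ.toEmbedding)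
        (fun S' => S'.map σ.symm.toEmbedding) ?_ ?_ ?_ ?_ ?_
      · intro S' hS'
        simp only [Finset.mem_powersetCard] at hS' ⊢
        exact ⟨Finset.subset_univ _, by simp [hS'.2]⟩
      · intro S' hS'
        simp only [Finset.mem_powersetCard] at hS' ⊢
        exact ⟨Finset.subset_univ _, by simp [hS'.2]⟩
      · intro S' _; ext j; simp
      · intro S' _; ext j; simp
      · intro S' _
        rw [Finset.prod_map]
        rfl
    rw [hre]
    have hterm : ∀ S' ∈ Finset.powersetCard s (univ : Finset (Fin n)),
        (∏ j ∈ S', x j) = if S' ⊆ T then (1 : ℝ) else 0 := by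
      intro S' _
      by_cases h : S' ⊆ T
      · rw [if_pos h, Finset.prod_eq_one]
        intro j hj
        have := h hj
        simp only [hT, Finset.mem_filter] at this
        exact this.2
      · rw [if_neg h]
        obtain ⟨j, hj, hjT⟩ := Finset.not_subset.mp h
        refine Finset.prod_eq_zero hj ?_
        rcases hx j with h0 | h1
        · exact h0
        · exact absurd (by simp [hT, h1]) hjT
    have hfilt : (Finset.powersetCard s (univ : Finset (Fin n))).filter (· ⊆ T) =
        Finset.powersetCard s T := by
      ext S'
      simp only [Finset.mem_filter, Finset.mem_powersetCard]
      constructor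
      · rintro ⟨⟨-, h2⟩, h3⟩; exact ⟨h3, h2⟩
      · rintro ⟨h1, h2⟩; exact ⟨⟨Finset.subset_univ _, h2⟩, h1⟩
    rw [Finset.sum_congr rfl hterm, Finset.sum_boole, hfilt, Finset.card_powersetCard]
  rw [Finset.sum_congr rfl (fun σ _ => hinner σ), Finset.sum_const, nsmul_eq_mul]
  simp [Fintype.card_perm]

/-- Minsky–Papert symmetrization: if `p : ℝⁿ → ℝ` is a polynomial of total degree at most
`d`, there is a univariate polynomial `p*` of degree at most `d` such that for every Boolean
input `x ∈ {0,1}ⁿ`, the average of `p(σx)` over all permutations `σ` equals `p*(|x|)`. -/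
theorem minsky_papert_symmetrization (n d : ℕ) (p : MvPolynomial (Fin n) ℝ)
    (hdeg : p.totalDegree ≤ d) :
    ∃ pstar : Polynomial ℝ, pstar.natDegree ≤ d ∧
      ∀ x : Fin n → ℝ, (∀ i, x i = 0 ∨ x i = 1) →
        (∑ σ : Equiv.Perm (Fin n), MvPolynomial.eval (fun i => x (σ i)) p)
            / (Nat.factorial n) =
          Polynomial.eval (∑ i, x i) pstar := by
  classical
  -- degree bound for supports of monomials
  have hsupp : ∀ m ∈ p.support, m.support.card ≤ d := by
    intro m hm
    have h1 : m.support.card ≤ m.sum fun _ e => e := by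
      rw [Finsupp.sum]
      calc m.support.card = ∑ i ∈ m.support, 1 := by simp
        _ ≤ ∑ i ∈ m.support, m i := by
            refine Finset.sum_le_sum fun i hi => ?_
            exact Nat.one_le_iff_ne_zero.mpr (Finsupp.mem_support_iff.mp hi)
    exact h1.trans ((MvPolynomial.le_totalDegree hm).trans hdeg)
  refine ⟨∑ m ∈ p.support, Polynomial.C
    (p.coeff m / ((n.choose m.support.card) * (m.support.card).factorial)) *
      descPochhammer ℝ m.support.card, ?_, ?_⟩
  · refine Polynomial.natDegree_sum_le_of_forall_le _ _ fun m hm => ?_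
    refine (Polynomial.natDegree_C_mul_le _ _).trans ?_
    rw [descPochhammer_natDegree]
    exact hsupp m hm
  · intro x hx
    set T : Finset (Fin n) := univ.filter fun i => x i = 1 with hT
    set t := T.card with ht
    -- the sum of the coordinates is the Hamming weight
    have hsumx : (∑ i, x i) = (t : ℝ) := by
      rw [← Finset.sum_filter_add_sum_filter_not univ (fun i => x i = 1)]
      have h2 : ∑ i ∈ univ.filter (fun i => ¬ x i = 1), x i = 0 := by
        refine Finset.sum_eq_zero fun i hi => ?_
        rcases hx i with h0 | h1
        · exact h0
        · exact absurd h1 (Finset.mem_filter.mp hi).2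
      have h1 : ∑ i ∈ univ.filter (fun i => x i = 1), x i = (t : ℝ) := by
        rw [Finset.sum_congr rfl (fun i hi => (Finset.mem_filter.mp hi).2)]
        simp [ht, hT]
      rw [h1, h2, add_zero]
    rw [hsumx]
    -- expand the evaluation of p
    have heval : ∀ σ : Equiv.Perm (Fin n),
        MvPolynomial.eval (fun i => x (σ i)) p =
        ∑ m ∈ p.support, p.coeff m * ∏ i ∈ m.support, x (σ i) := by
      intro σ
      rw [MvPolynomial.eval_eq]
      refine Finset.sum_congr rfl fun m hm => ?_
      congr 1
      refine Finset.prod_congr rfl fun i hi => ?_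
      exact mp_pow_self (hx (σ i)) (Finsupp.mem_support_iff.mp hi)
    rw [Fintype.sum_congr _ _ heval, Finset.sum_comm, Polynomial.eval_finset_sum,
      Finset.sum_div]
    refine Finset.sum_congr rfl fun m hm => ?_
    set s := m.support.card with hs
    have hsn : s ≤ n := by
      have := Finset.card_le_univ m.support
      simpa [Fintype.card_fin] using this
    have hkey := mp_key x hx m.support
    rw [← Finset.mul_sum] at *
    have hC : (n.choose s : ℝ) ≠ 0 := by
      exact_mod_cast (Nat.choose_pos hsn).ne'
    have hF : ((n.factorial : ℝ)) ≠ 0 := by exact_mod_cast n.factorial_ne_zero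
    have hSF : ((s.factorial : ℝ)) ≠ 0 := by exact_mod_cast s.factorial_ne_zero
    have hV : (∑ σ : Equiv.Perm (Fin n), ∏ i ∈ m.support, x (σ i)) =
        (n.factorial : ℝ) * (t.choose s : ℝ) / (n.choose s : ℝ) := by
      field_simp
      linarith [hkey]
    rw [hV, Polynomial.eval_mul, Polynomial.eval_C,
      descPochhammer_eval_eq_descFactorial ℝ t s,
      Nat.descFactorial_eq_factorial_mul_choose]
    push_cast
    field_simp
end
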